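/- arXiv:1402.4756 — 8 statements merged into one kernel-verified Lean document; each statement's English description precedes it below -/
import Mathlib

section
/- Let F, G : ℝ → ℝ be monotone nondecreasing continuous maps satisfying F(x+1) = F(x)+1 and G(x+1) = G(x)+1 for all x ∈ ℝ (lifts of degree-one circle maps). If F(x) > G(x) for all x ∈ ℝ, then Trans(F) ≥ Trans(G). Moreover, if at least one of Trans(F), Trans(G) is irrational, then Trans(F) > Trans(G). -/
open Filter Topology Set

/-- `τ` is the translation number of `F`: for every `x`, `(F^[n] x - x)/n → τ`. -/
def IsTransNum (F : ℝ → ℝ) (τ : ℝ) : Prop :=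
  ∀ x : ℝ, Filter.Tendsto (fun n : ℕ => (F^[n] x - x) / n) Filter.atTop (nhds τ)

theorem stmt_0 (F G : ℝ → ℝ)
    (hFmono : Monotone F) (hGmono : Monotone G)
    (hFcont : Continuous F) (hGcont : Continuous G)
    (hFdeg : ∀ x : ℝ, F (x + 1) = F x + 1)
    (hGdeg : ∀ x : ℝ, G (x + 1) = G x + 1)
    (hFG : ∀ x : ℝ, F x > G x)
    (τF τG : ℝ) (hτF : IsTransNum F τF) (hτG : IsTransNum G τG) :
    τF ≥ τG ∧ ((Irrational τF ∨ Irrational τG) → τF > τG) := by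
  -- package as CircleDeg1Lift
  set f : CircleDeg1Lift := ⟨⟨F, hFmono⟩, hFdeg⟩ with hf
  set g : CircleDeg1Lift := ⟨⟨G, hGmono⟩, hGdeg⟩ with hg
  have hfc : ⇑f = F := rfl
  have hgc : ⇑g = G := rfl
  have hfp : ∀ n : ℕ, ⇑(f ^ n) = F^[n] := fun n => by rw [CircleDeg1Lift.coe_pow, hfc]
  have hgp : ∀ n : ℕ, ⇑(g ^ n) = G^[n] := fun n => by rw [CircleDeg1Lift.coe_pow, hgc]
  have hτf : CircleDeg1Lift.translationNumber f = τF := by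
    refine tendsto_nhds_unique ?_ (hτF 0)
    simpa [hfp 0, hfp] using f.tendsto_translationNumber 0
  have hτg : CircleDeg1Lift.translationNumber g = τG := by
    refine tendsto_nhds_unique ?_ (hτG 0)
    simpa [hgp] using g.tendsto_translationNumber 0
  -- pointwise comparison of iterates
  have hiter : ∀ n : ℕ, ∀ x : ℝ, G^[n] x ≤ F^[n] x := by
    intro n
    induction n with
    | zero => intro x; simp
    | succ k ih =>
      intro x
      rw [Function.iterate_succ_apply', Function.iterate_succ_apply']
      exact le_trans (hGmono (ih x)) (hFG _).le
  have hle : τG ≤ τF := by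
    refine le_of_tendsto_of_tendsto' (hτG 0) (hτF 0) fun n => ?_
    have := hiter n 0
    gcongr
  refine ⟨hle, fun hirr => ?_⟩
  by_contra hnot
  have heq : τF = τG := le_antisymm (not_lt.1 hnot) hle
  set τ : ℝ := τG with hτ
  have hirrτ : Irrational τ := by
    rcases hirr with h | h
    · rwa [heq] at h
    · exact h
  -- find a uniform gap ε'
  obtain ⟨x₀, -, hx₀⟩ : ∃ x₀ ∈ Icc (0:ℝ) 1, ∀ y ∈ Icc (0:ℝ) 1, F x₀ - G x₀ ≤ F y - G y :=
    isCompact_Icc.exists_isMinOn (nonempty_Icc.2 zero_le_one)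
      ((hFcont.sub hGcont).continuousOn)
  set ε : ℝ := min (F x₀ - G x₀) (1/2) with hε
  have hε0 : 0 < ε := lt_min (sub_pos.2 (hFG x₀)) (by norm_num)
  have hε1 : ε < 1 := lt_of_le_of_lt (min_le_right _ _) (by norm_num)
  have hgap : ∀ x : ℝ, G x + ε ≤ F x := by
    intro x
    have h1 : F x - x = F (Int.fract x) - Int.fract x := (f.map_fract_sub_fract_eq x).symm
    have h2 : G x - x = G (Int.fract x) - Int.fract x := (g.map_fract_sub_fract_eq x).symm
    have h3 : F x - G x = F (Int.fract x) - G (Int.fract x) := by linarith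
    have h4 := hx₀ (Int.fract x) ⟨Int.fract_nonneg x, (Int.fract_lt_one x).le⟩
    have h5 : ε ≤ F x₀ - G x₀ := min_le_left _ _
    linarith
  -- quantitative iterate gap
  have hqiter : ∀ n : ℕ, ∀ x : ℝ, G^[n+1] x + ε ≤ F^[n+1] x := by
    intro n x
    rw [Function.iterate_succ_apply', Function.iterate_succ_apply']
    calc G (G^[n] x) + ε ≤ G (F^[n] x) + ε := by gcongr; exact hGmono (hiter n x)
      _ ≤ F (F^[n] x) := hgap _
  -- density of ℤ + ℤτ
  set S : AddSubgroup ℝ := AddSubgroup.closure ({1, τ} : Set ℝ) with hS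
  have h1S : (1 : ℝ) ∈ S := AddSubgroup.subset_closure (Set.mem_insert _ _)
  have hτS : τ ∈ S := AddSubgroup.subset_closure (Set.mem_insert_of_mem _ rfl)
  rcases S.dense_or_cyclic with hd | ⟨a, ha⟩
  · -- dense case: find 0 < m + qτ < ε
    obtain ⟨z, hzS, hz⟩ := hd.exists_mem_open isOpen_Ioo (⟨ε/2, by constructor <;> linarith⟩ :
      (Set.Ioo (0:ℝ) ε).Nonempty)
    obtain ⟨m, q, hmq⟩ := AddSubgroup.mem_closure_pair.1 hzS
    have hzval : (m : ℝ) + q * τ = z := by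
      simpa [zsmul_eq_mul] using hmq
    have hq0 : q ≠ 0 := by
      rintro rfl
      have hzm : (m:ℝ) = z := by push_cast at hzval; linarith
      rcases hz with ⟨hz1, hz2⟩
      rw [← hzm] at hz1 hz2
      have hm1 : (0:ℤ) < m := by exact_mod_cast hz1
      have hm2 : (m:ℤ) < 1 := by exact_mod_cast lt_trans hz2 hε1
      omega
    rcases lt_or_gt_of_ne hq0 with hqneg | hqpos
    · -- q < 0 : let N = -q > 0, then m - ε < Nτ < m
      set N : ℕ := (-q).toNat with hN
      have hNq : (N : ℝ) = -q := by
        have : ((-q).toNat : ℤ) = -q := Int.toNat_of_nonneg (by omega)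
        exact_mod_cast congrArg (Int.cast : ℤ → ℝ) this
      have hNτ : (N : ℝ) * τ = (m : ℝ) - z := by rw [hNq]; linarith [hzval]
      have hτfN : CircleDeg1Lift.translationNumber (f ^ N) < (m : ℝ) := by
        rw [f.translationNumber_pow, hτf, heq, hNτ]
        linarith [hz.1]
      have hflt : ∀ x : ℝ, (f ^ N) x < x + (m : ℝ) :=
        (f ^ N).map_lt_of_translationNumber_lt_int hτfN
      have hgle : ∀ x : ℝ, (g ^ N) x ≤ x + ((m : ℝ) - ε) := by
        intro x
        have hN1 : 1 ≤ N := by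
          have : (0:ℝ) < N := by rw [hNq]; exact_mod_cast by omega
          exact_mod_cast Nat.one_le_iff_ne_zero.2 (by exact_mod_cast this.ne')
        obtain ⟨k, hk⟩ : ∃ k, N = k + 1 := ⟨N - 1, by omega⟩
        have hq := hqiter k x
        have hF := hflt x
        rw [hfp, hk] at hF
        rw [hgp, hk]
        linarith
      have : CircleDeg1Lift.translationNumber (g ^ N) ≤ (m : ℝ) - ε :=
        (g ^ N).translationNumber_le_of_le_add hgle
      rw [g.translationNumber_pow, hτg, hNτ] at this
      linarith [hz.2]
    · -- q > 0 : let N = q, M = -m, then M < Nτ < M + ε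
      set N : ℕ := q.toNat with hN
      have hNq : (N : ℝ) = q := by
        have : (q.toNat : ℤ) = q := Int.toNat_of_nonneg (by omega)
        exact_mod_cast congrArg (Int.cast : ℤ → ℝ) this
      have hNτ : (N : ℝ) * τ = ((-m : ℤ) : ℝ) + z := by
        push_cast; rw [hNq]; linarith [hzval]
      have hτgN : ((-m : ℤ) : ℝ) < CircleDeg1Lift.translationNumber (g ^ N) := by
        rw [g.translationNumber_pow, hτg, hNτ]
        linarith [hz.1]
      have hglt : ∀ x : ℝ, x + ((-m : ℤ) : ℝ) < (g ^ N) x :=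
        (g ^ N).lt_map_of_int_lt_translationNumber hτgN
      have hfge : ∀ x : ℝ, x + (((-m : ℤ) : ℝ) + ε) ≤ (f ^ N) x := by
        intro x
        have hN1 : 1 ≤ N := by
          have : (0:ℝ) < N := by rw [hNq]; exact_mod_cast by omega
          exact_mod_cast Nat.one_le_iff_ne_zero.2 (by exact_mod_cast this.ne')
        obtain ⟨k, hk⟩ : ∃ k, N = k + 1 := ⟨N - 1, by omega⟩
        have hq := hqiter k x
        have hG := hglt x
        rw [hgp, hk] at hG
        rw [hfp, hk]
        linarith
      have : ((-m : ℤ) : ℝ) + ε ≤ CircleDeg1Lift.translationNumber (f ^ N) :=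
        (f ^ N).le_translationNumber_of_add_le hfge
      rw [f.translationNumber_pow, hτf, heq, hNτ] at this
      linarith [hz.2]
  · -- cyclic case contradicts irrationality
    rw [ha] at h1S hτS
    obtain ⟨n, hn⟩ := AddSubgroup.mem_closure_singleton.1 h1S
    obtain ⟨k, hk⟩ := AddSubgroup.mem_closure_singleton.1 hτS
    have hn' : (n : ℝ) * a = 1 := by simpa [zsmul_eq_mul] using hn
    have hk' : (k : ℝ) * a = τ := by simpa [zsmul_eq_mul] using hk
    have hn0 : (n : ℝ) ≠ 0 := by
      intro h; rw [h, zero_mul] at hn'; exact one_ne_zero hn'.symm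
    have : τ = ((k / n : ℚ) : ℝ) := by
      have ha' : a = 1 / (n : ℝ) := by field_simp at hn' ⊢; linarith
      rw [← hk', ha']
      push_cast
      field_simp
    exact (Rat.not_irrational _) (this ▸ hirrτ)
end

section
/- Let F : ℝ → ℝ be an increasing homeomorphism with F(x+1) = F(x)+1 for all x, and for t ∈ ℝ set F_t(x) := F(x) + t. Then: (i) the map t ↦ Trans(F_t) is continuous and nondecreasing; (ii) Trans(F_{t+1}) = Trans(F_t) + 1 for all t; (iii) for every α ∈ ℝ the set I_α = {t ∈ ℝ : Trans(F_t) = α} is a nonempty closed bounded interval; (iv) if α is irrational then I_α consists of a single point; (v) for coprime integers p, q with q ≥ 1, I_{p/q} is the single point {t₀} if and only if F_{t₀}^{∘q}(x) = x + p for all x ∈ ℝ. -/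
open Filter Topology Set

/-!
Write `f_t = f + t`. Since `t ↦ τ(f_t)` is monotone, continuous and satisfies
`τ(f_{t+1}) = τ(f_t) + 1`, it is itself a continuous lift of a degree one circle map, hence
surjective with compact interval fibres. Continuity holds because `τ(f_t) < m/n` is witnessed
by a single strict inequality `f_t^n x < x + m`, an open condition in `t`.

Moving `t` up by `δ > 0` pushes every iterate `f_t^n` up by at least `δ`. If
`τ(f_t) = τ(f_{t+δ}) = τ`, both `n`-th iterates have a point of displacement exactly `nτ`, so by
the intermediate value theorem every integer `p` with `|nτ - p| < δ` is a displacement of one of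
them, which forces `nτ = p`; for irrational `τ`, Dirichlet's approximation theorem provides such
`n` and `p`. For `τ = p/q` the same push shows that the fibre is `{t₀}` when `f_{t₀}^q` is the
translation by `p`; conversely, a point with `f_{t₀}^q x ≠ x + p` keeps that strict inequality
for `t` near `t₀`, which pins `τ(f_t)` to `p/q` on one side of `t₀`.
-/

namespace CircleDeg1Lift

local notation "τ" => translationNumber

variable {f : CircleDeg1Lift} {x : ℝ} {m : ℤ} {n : ℕ}

theorem translationNumber_le_div_of_map_pow_le (hn : 0 < n) (h : (f ^ n) x ≤ x + m) :
    τ f ≤ m / n := by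
  rw [le_div_iff₀ (by positivity), mul_comm, ← translationNumber_pow]
  exact translationNumber_le_of_le_add_int _ h

theorem div_le_translationNumber_of_le_map_pow (hn : 0 < n) (h : x + m ≤ (f ^ n) x) :
    m / n ≤ τ f := by
  rw [div_le_iff₀ (by positivity), mul_comm, ← translationNumber_pow]
  exact le_translationNumber_of_add_int_le _ h

theorem map_pow_lt_of_translationNumber_lt_div (hn : 0 < n) (h : τ f < m / n) (x : ℝ) :
    (f ^ n) x < x + m := by
  rw [lt_div_iff₀ (by positivity), mul_comm, ← translationNumber_pow] at h
  exact map_lt_of_translationNumber_lt_int _ h x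

theorem lt_map_pow_of_div_lt_translationNumber (hn : 0 < n) (h : m / n < τ f) (x : ℝ) :
    x + m < (f ^ n) x := by
  rw [div_lt_iff₀ (by positivity), mul_comm, ← translationNumber_pow] at h
  exact lt_map_of_int_lt_translationNumber _ h x

theorem translationNumber_eq_int_of_forall_add_le {g h : CircleDeg1Lift} (hg : Continuous g)
    (hh : Continuous h) (hgh : τ g = τ h) {δ : ℝ} (hδ : ∀ x, g x + δ ≤ h x) {m : ℤ}
    (hm : |τ g - m| < δ) : τ g = m := by
  obtain ⟨x, hx⟩ := g.exists_eq_add_translationNumber hg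
  obtain ⟨y, hy⟩ := h.exists_eq_add_translationNumber hh
  rw [abs_lt] at hm
  rcases le_total (m : ℝ) (τ g) with hle | hle
  · refine (g.translationNumber_eq_int_iff hg).2 <|
      intermediate_value_univ₂ (a := y) (b := x) hg (by fun_prop) ?_ ?_
    · linarith [hδ y]
    · linarith
  · rw [hgh]
    refine (h.translationNumber_eq_int_iff hh).2 <|
      intermediate_value_univ₂ (a := y) (b := x) hh (by fun_prop) ?_ ?_
    · linarith
    · linarith [hδ x]

theorem exists_preimage_singleton_eq_Icc {Φ : CircleDeg1Lift} (hΦ : Continuous Φ) (α : ℝ) :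
    ∃ a b, a ≤ b ∧ Φ ⁻¹' {α} = Icc a b := by
  obtain ⟨t₀, ht₀⟩ := Φ.continuous_iff_surjective.1 hΦ α
  have hsub : Φ ⁻¹' {α} ⊆ Icc (t₀ - 1) (t₀ + 1) := by
    intro t (ht : Φ t = α)
    constructor <;> by_contra! hlt
    · have := Φ.monotone (show t + 1 ≤ t₀ by linarith)
      rw [map_add_one] at this
      linarith
    · have := Φ.monotone (show t₀ + 1 ≤ t by linarith)
      rw [map_add_one] at this
      linarith
  have hcpt : IsCompact (Φ ⁻¹' {α}) :=
    isCompact_Icc.of_isClosed_subset (isClosed_singleton.preimage hΦ) hsub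
  have hconn : IsConnected (Φ ⁻¹' {α}) := ⟨⟨t₀, ht₀⟩, (ordConnected_preimage Φ).isPreconnected⟩
  have hIcc := eq_Icc_of_connected_compact hconn hcpt
  exact ⟨_, _, nonempty_Icc.1 (hIcc ▸ ⟨t₀, ht₀⟩), hIcc⟩

section Family

variable {X : Type*} [TopologicalSpace X] {g : X → CircleDeg1Lift} {t₀ : X}

theorem eventually_translationNumber_le_of_map_pow_lt
    (hg : Continuous fun t => (g t ^ n) x) (hn : 0 < n) (h : (g t₀ ^ n) x < x + m) :
    ∀ᶠ t in 𝓝 t₀, τ (g t) ≤ m / n := by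
  filter_upwards [(isOpen_lt hg continuous_const).mem_nhds h] with t ht
  exact translationNumber_le_div_of_map_pow_le hn ht.le

theorem eventually_div_le_translationNumber_of_lt_map_pow
    (hg : Continuous fun t => (g t ^ n) x) (hn : 0 < n) (h : x + m < (g t₀ ^ n) x) :
    ∀ᶠ t in 𝓝 t₀, m / n ≤ τ (g t) := by
  filter_upwards [(isOpen_lt continuous_const hg).mem_nhds h] with t ht
  exact div_le_translationNumber_of_le_map_pow hn ht.le

theorem continuous_translationNumber_comp (hg : ∀ n x, Continuous fun t => (g t ^ n) x) :
    Continuous fun t => τ (g t) := by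
  refine continuous_iff_continuousAt.2 fun t₀ =>
    tendsto_order.2 ⟨fun a ha => ?_, fun b hb => ?_⟩
  · obtain ⟨r, har, hr⟩ := exists_rat_btwn ha
    rw [Rat.cast_def] at har hr
    filter_upwards [eventually_div_le_translationNumber_of_lt_map_pow (hg _ 0) r.den_pos
      (lt_map_pow_of_div_lt_translationNumber r.den_pos hr 0)] with t ht
    exact har.trans_le ht
  · obtain ⟨r, hr, hrb⟩ := exists_rat_btwn hb
    rw [Rat.cast_def] at hr hrb
    filter_upwards [eventually_translationNumber_le_of_map_pow_lt (hg _ 0) r.den_pos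
      (map_pow_lt_of_translationNumber_lt_div r.den_pos hr 0)] with t ht
    exact ht.trans_lt hrb

end Family

def addConst (f : CircleDeg1Lift) (t : ℝ) : CircleDeg1Lift where
  toFun x := f x + t
  monotone' _ _ h := add_le_add_left (f.monotone h) t
  map_add_one' x := by rw [map_add_one, add_right_comm]

variable {t t' t₀ : ℝ}

@[simp]
theorem addConst_apply (x : ℝ) : f.addConst t x = f x + t :=
  rfl

theorem continuous_addConst (hf : Continuous f) (t : ℝ) : Continuous (f.addConst t) :=
  hf.add continuous_const

theorem addConst_mono (f : CircleDeg1Lift) : Monotone f.addConst :=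
  fun _ _ h _ => add_le_add_right h _

theorem addConst_add_one (t : ℝ) :
    f.addConst (t + 1) = translate (Multiplicative.ofAdd 1) * f.addConst t :=
  ext fun x => by simp only [mul_apply, addConst_apply, translate_apply]; ring

theorem translationNumber_addConst_add_one (f : CircleDeg1Lift) (t : ℝ) :
    τ (f.addConst (t + 1)) = τ (f.addConst t) + 1 := by
  have hcomm : Commute (translate (Multiplicative.ofAdd 1) : CircleDeg1Lift) (f.addConst t) :=
    ext fun x => by simp only [mul_apply, addConst_apply, translate_apply, map_one_add]
  rw [addConst_add_one, translationNumber_mul_of_commute hcomm, translationNumber_translate,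
    add_comm]

theorem addConst_pow_apply_add_le (hn : 0 < n) (htt' : t ≤ t') (x : ℝ) :
    (f.addConst t ^ n) x + (t' - t) ≤ (f.addConst t' ^ n) x := by
  obtain ⟨k, rfl⟩ := Nat.exists_eq_add_one_of_ne_zero hn.ne'
  have := f.monotone (pow_mono (f.addConst_mono htt') k x)
  simp only [pow_succ', mul_apply, addConst_apply]
  linarith

theorem continuous_addConst_pow_apply (hf : Continuous f) (n : ℕ) (x : ℝ) :
    Continuous fun t => (f.addConst t ^ n) x := by
  induction n with
  | zero => exact continuous_const
  | succ n ih =>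
    simp only [pow_succ', mul_apply, addConst_apply]
    exact (hf.comp ih).add continuous_id

noncomputable def translationNumberAddConst (f : CircleDeg1Lift) : CircleDeg1Lift where
  toFun t := τ (f.addConst t)
  monotone' := translationNumber_mono.comp f.addConst_mono
  map_add_one' := translationNumber_addConst_add_one f

theorem continuous_translationNumberAddConst (hf : Continuous f) :
    Continuous f.translationNumberAddConst :=
  continuous_translationNumber_comp (continuous_addConst_pow_apply hf)

theorem eq_of_translationNumber_addConst_eq (hf : Continuous f)
    (hirr : Irrational (τ (f.addConst t))) (h : τ (f.addConst t) = τ (f.addConst t')) :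
    t = t' := by
  wlog hle : t ≤ t' generalizing t t'
  · exact (this (h ▸ hirr) h.symm (le_of_not_ge hle)).symm
  refine hle.eq_or_lt.resolve_right fun hlt => ?_
  obtain ⟨N, hN⟩ := exists_nat_one_div_lt (sub_pos.2 hlt)
  obtain ⟨k, hk, -, hkα⟩ :=
    Real.exists_nat_abs_mul_sub_round_le (τ (f.addConst t)) N.succ_pos
  have hclose : |τ (f.addConst t ^ k) - round (k * τ (f.addConst t))| < t' - t := by
    refine (translationNumber_pow _ k).symm ▸ hkα.trans_lt (lt_of_le_of_lt ?_ hN)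
    gcongr
    linarith
  have hint := translationNumber_eq_int_of_forall_add_le
    ((f.addConst t).continuous_pow (continuous_addConst hf t) k)
    ((f.addConst t').continuous_pow (continuous_addConst hf t') k)
    (by rw [translationNumber_pow, translationNumber_pow, h]) (addConst_pow_apply_add_le hk hle)
    hclose
  rw [translationNumber_pow] at hint
  exact (hirr.natCast_mul hk.ne').ne_int _ hint

theorem existsUnique_translationNumberAddConst_eq (hf : Continuous f) {α : ℝ}
    (hα : Irrational α) : ∃! t, f.translationNumberAddConst t = α := by
  obtain ⟨t, rfl⟩ := f.translationNumberAddConst.continuous_iff_surjective.1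
    (continuous_translationNumberAddConst hf) α
  exact ⟨t, rfl, fun t' ht' => (eq_of_translationNumber_addConst_eq hf hα ht'.symm).symm⟩

theorem translationNumber_addConst_lt_div_of_lt (hn : 0 < n)
    (hfix : ∀ x, (f.addConst t₀ ^ n) x = x + m) (ht : t < t₀) : τ (f.addConst t) < m / n := by
  have : τ (f.addConst t ^ n) ≤ m - (t₀ - t) := translationNumber_le_of_le_add _ fun x => by
    linarith [addConst_pow_apply_add_le (f := f) hn ht.le x, hfix x]
  rw [translationNumber_pow] at this
  rw [lt_div_iff₀ (by positivity)]
  linarith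

theorem div_lt_translationNumber_addConst_of_lt (hn : 0 < n)
    (hfix : ∀ x, (f.addConst t₀ ^ n) x = x + m) (ht : t₀ < t) : m / n < τ (f.addConst t) := by
  have : m + (t - t₀) ≤ τ (f.addConst t ^ n) := le_translationNumber_of_add_le _ fun x => by
    linarith [addConst_pow_apply_add_le (f := f) hn ht.le x, hfix x]
  rw [translationNumber_pow] at this
  rw [div_lt_iff₀ (by positivity)]
  linarith

theorem setOf_translationNumber_addConst_eq_div_eq_singleton (hn : 0 < n)
    (hfix : ∀ x, (f.addConst t₀ ^ n) x = x + m) :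
    {t | τ (f.addConst t) = m / n} = {t₀} := by
  ext t
  refine ⟨fun ht => ?_, fun ht => ?_⟩
  · rcases lt_trichotomy t t₀ with hlt | heq | hgt
    · exact absurd ht (translationNumber_addConst_lt_div_of_lt hn hfix hlt).ne
    · exact heq
    · exact absurd ht (div_lt_translationNumber_addConst_of_lt hn hfix hgt).ne'
  · rw [mem_singleton_iff.1 ht]
    exact translationNumber_of_map_pow_eq_add_int _ (hfix 0) hn

theorem map_pow_addConst_eq_add_of_setOf_eq_singleton (hn : 0 < n) (hf : Continuous f)
    (h : {t | τ (f.addConst t) = m / n} = {t₀}) (x : ℝ) :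
    (f.addConst t₀ ^ n) x = x + m := by
  have hmem : ∀ t, τ (f.addConst t) = m / n → t = t₀ := fun t ht => h.subset ht
  have ht₀ : τ (f.addConst t₀) = m / n := h.symm.subset rfl
  have hcont := continuous_addConst_pow_apply hf n x
  refine le_antisymm (not_lt.1 fun hlt => ?_) (not_lt.1 fun hlt => ?_)
  · obtain ⟨t, ht, htt₀ : t < t₀⟩ :=
      ((eventually_div_le_translationNumber_of_lt_map_pow hcont hn hlt).filter_mono
        nhdsWithin_le_nhds |>.and (eventually_mem_nhdsWithin (s := Iio t₀))).exists
    have := translationNumber_mono (f.addConst_mono htt₀.le)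
    exact htt₀.ne (hmem t (le_antisymm (ht₀ ▸ this) ht))
  · obtain ⟨t, ht, htt₀ : t₀ < t⟩ :=
      ((eventually_translationNumber_le_of_map_pow_lt hcont hn hlt).filter_mono
        nhdsWithin_le_nhds |>.and (eventually_mem_nhdsWithin (s := Ioi t₀))).exists
    have := translationNumber_mono (f.addConst_mono htt₀.le)
    exact htt₀.ne' (hmem t (le_antisymm ht (ht₀ ▸ this)))

end CircleDeg1Lift

theorem IsTransNum.eq_translationNumber {f : CircleDeg1Lift} {a : ℝ} (h : IsTransNum f a) :
    a = f.translationNumber :=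
  tendsto_nhds_unique (h 0) <| by
    simpa only [CircleDeg1Lift.coe_pow] using f.tendsto_translationNumber 0

open CircleDeg1Lift in
theorem stmt_1_general (F : ℝ → ℝ)
    (hFmono : StrictMono F) (hFcont : Continuous F)
    (hFdeg : ∀ x : ℝ, F (x + 1) = F x + 1)
    (τ : ℝ → ℝ)
    (hτ : ∀ t : ℝ, IsTransNum (fun x => F x + t) (τ t)) :
    -- (i) continuity and monotonicity
    (Continuous τ ∧ Monotone τ) ∧
    -- (ii) τ(t+1) = τ(t) + 1
    (∀ t : ℝ, τ (t + 1) = τ t + 1) ∧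
    -- (iii) each fiber is a nonempty closed bounded interval
    (∀ α : ℝ, ∃ tl tr : ℝ, tl ≤ tr ∧ {t : ℝ | τ t = α} = Set.Icc tl tr) ∧
    -- (iv) irrational fibers are singletons
    (∀ α : ℝ, Irrational α → ∃! t : ℝ, τ t = α) ∧
    -- (v) rational fiber is a singleton iff the iterate is the translation by p
    (∀ (p : ℤ) (q : ℕ), 1 ≤ q → Nat.Coprime p.natAbs q → ∀ t₀ : ℝ,
      ({t : ℝ | τ t = (p : ℝ) / (q : ℝ)} = {t₀} ↔
        ∀ x : ℝ, (fun x => F x + t₀)^[q] x = x + (p : ℝ))) := by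
  let f : CircleDeg1Lift := ⟨⟨F, hFmono.monotone⟩, hFdeg⟩
  obtain rfl : τ = f.translationNumberAddConst :=
    funext fun t => IsTransNum.eq_translationNumber (f := f.addConst t) (hτ t)
  have hcont := continuous_translationNumberAddConst (f := f) hFcont
  refine ⟨⟨hcont, f.translationNumberAddConst.monotone⟩, f.translationNumberAddConst.map_add_one,
    exists_preimage_singleton_eq_Icc hcont,
    fun _ => existsUnique_translationNumberAddConst_eq hFcont, fun p q hq _ t₀ => ?_⟩
  show _ ↔ ∀ x, (f.addConst t₀)^[q] x = x + p
  simp only [← coe_pow]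
  exact ⟨map_pow_addConst_eq_add_of_setOf_eq_singleton hq hFcont,
    setOf_translationNumber_addConst_eq_div_eq_singleton hq⟩

theorem stmt_1 (F : ℝ → ℝ)
    (hFmono : StrictMono F) (hFcont : Continuous F) (hFsurj : Function.Surjective F)
    (hFdeg : ∀ x : ℝ, F (x + 1) = F x + 1)
    (τ : ℝ → ℝ)
    (hτ : ∀ t : ℝ, IsTransNum (fun x => F x + t) (τ t)) :
    -- (i) continuity and monotonicity
    (Continuous τ ∧ Monotone τ) ∧
    -- (ii) τ(t+1) = τ(t) + 1
    (∀ t : ℝ, τ (t + 1) = τ t + 1) ∧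
    -- (iii) each fiber is a nonempty closed bounded interval
    (∀ α : ℝ, ∃ tl tr : ℝ, tl ≤ tr ∧ {t : ℝ | τ t = α} = Set.Icc tl tr) ∧
    -- (iv) irrational fibers are singletons
    (∀ α : ℝ, Irrational α → ∃! t : ℝ, τ t = α) ∧
    -- (v) rational fiber is a singleton iff the iterate is the translation by p
    (∀ (p : ℤ) (q : ℕ), 1 ≤ q → Nat.Coprime p.natAbs q → ∀ t₀ : ℝ,
      ({t : ℝ | τ t = (p : ℝ) / (q : ℝ)} = {t₀} ↔
        ∀ x : ℝ, (fun x => F x + t₀)^[q] x = x + (p : ℝ))) :=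
  stmt_1_general F hFmono hFcont hFdeg τ hτ
end

section
/- Let φ : ℝ → ℝ be Lipschitz with constant K > 0 and 1-periodic, let J = (−1/K, 1/K), and let (t₀,a₀), (t,a) ∈ ℝ × J. If either (a > a₀ and (t − t₀)/(a − a₀) < −sup φ) or (a < a₀ and (t − t₀)/(a − a₀) > −inf φ), then Trans(F_{t,a}) ≤ Trans(F_{t₀,a₀}). If either (a > a₀ and (t − t₀)/(a − a₀) > −inf φ) or (a < a₀ and (t − t₀)/(a − a₀) < −sup φ), then Trans(F_{t,a}) ≥ Trans(F_{t₀,a₀}). In each case the inequality is strict if Trans(F_{t₀,a₀}) is irrational. -/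
/-!
Each `F_{t,a}` is the lift of a circle map. Under either slope condition, `F_{t,a} - F_{t₀,a₀}`
equals `(t - t₀) + (a - a₀) φ` and is bounded away from `0` with a constant sign, so one lift
exceeds the other by some `ε > 0` everywhere; monotonicity of the translation number gives the
weak inequality. For the strict one, if the two translation numbers were equal to an irrational
`α`, pick by Dirichlet `q ≥ 1` with `q α` within `ε` of an integer `p`. On whichever side of `p`
the number `q α` lies, the `ε`-gap between the `q`-th iterates pushes one of the two translation
numbers of the iterates past `p` by `ε`, away from `q α`.
-/

open Filter Topology Set

theorem Real.exists_pos_nat_abs_mul_sub_round_lt (ξ : ℝ) {ε : ℝ} (hε : 0 < ε) :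
    ∃ q : ℕ, 0 < q ∧ |q * ξ - round (q * ξ)| < ε := by
  obtain ⟨n, hn⟩ := exists_nat_one_div_lt hε
  obtain ⟨q, hq, -, hqξ⟩ := Real.exists_nat_abs_mul_sub_round_le ξ n.succ_pos
  refine ⟨q, hq, hqξ.trans_lt (lt_of_le_of_lt ?_ hn)⟩
  gcongr
  linarith

namespace CircleDeg1Lift

theorem pow_apply_add_le_pow_apply {f g : CircleDeg1Lift} {ε : ℝ} (hε : 0 ≤ ε)
    (h : ∀ x, f x + ε ≤ g x) {n : ℕ} (hn : 0 < n) (x : ℝ) : (f ^ n) x + ε ≤ (g ^ n) x := by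
  obtain ⟨n, rfl⟩ := Nat.exists_eq_add_one_of_ne_zero hn.ne'
  have hfg : f ≤ g := fun y => by linarith [h y]
  calc (f ^ (n + 1)) x + ε = f ((f ^ n) x) + ε := by rw [pow_succ', mul_apply]
    _ ≤ g ((f ^ n) x) := h _
    _ ≤ g ((g ^ n) x) := g.mono (pow_mono hfg n x)
    _ = (g ^ (n + 1)) x := by rw [pow_succ', mul_apply]

theorem translationNumber_lt_of_forall_add_le {f g : CircleDeg1Lift} {ε : ℝ} (hε : 0 < ε)
    (h : ∀ x, f x + ε ≤ g x)
    (hirr : Irrational f.translationNumber ∨ Irrational g.translationNumber) :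
    f.translationNumber < g.translationNumber := by
  refine (translationNumber_mono fun x => by linarith [h x]).lt_of_ne fun heq => ?_
  have hirr : Irrational f.translationNumber := hirr.elim id (heq ▸ ·)
  obtain ⟨q, hq, hqε⟩ := Real.exists_pos_nat_abs_mul_sub_round_lt f.translationNumber hε
  set p := round (q * f.translationNumber)
  have hpow := pow_apply_add_le_pow_apply hε.le h hq
  have hτf : (f ^ q).translationNumber = q * f.translationNumber := translationNumber_pow f q
  have hτg : (g ^ q).translationNumber = q * f.translationNumber := by
    rw [translationNumber_pow, heq]
  rw [abs_lt] at hqε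
  rcases ((hirr.natCast_mul hq.ne').ne_int p).lt_or_gt with hlt | hgt
  · have : (f ^ q).translationNumber ≤ p - ε := translationNumber_le_of_le_add _ fun x => by
      linarith [hpow x, (g ^ q).map_lt_of_translationNumber_lt_int (hτg ▸ hlt) x]
    linarith
  · have : p + ε ≤ (g ^ q).translationNumber := le_translationNumber_of_add_le _ fun x => by
      linarith [hpow x, (f ^ q).lt_map_of_int_lt_translationNumber (hτf ▸ hgt) x]
    linarith

end CircleDeg1Lift

theorem IsTransNum.translationNumber_eq {f : CircleDeg1Lift} {σ : ℝ} (h : IsTransNum f σ) :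
    f.translationNumber = σ :=
  f.translationNumber_eq_of_tendsto₀ (by simpa using h 0)

theorem IsTransNum.le_and_lt_of_forall_add_le {f g : CircleDeg1Lift} {σ σ' ε : ℝ}
    (hf : IsTransNum f σ) (hg : IsTransNum g σ') (hε : 0 < ε) (h : ∀ x, f x + ε ≤ g x) :
    σ ≤ σ' ∧ (Irrational σ ∨ Irrational σ' → σ < σ') := by
  rw [← hf.translationNumber_eq, ← hg.translationNumber_eq]
  exact ⟨CircleDeg1Lift.translationNumber_mono fun x => by linarith [h x],
    CircleDeg1Lift.translationNumber_lt_of_forall_add_le hε h⟩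

theorem monotone_add_add_mul_of_abs_mul_le_one {φ : ℝ → ℝ} {K a : ℝ}
    (hLip : ∀ x y, |φ x - φ y| ≤ K * |x - y|) (ha : |a| * K ≤ 1) (t : ℝ) :
    Monotone fun x => x + t + a * φ x := by
  intro x y hxy
  have : a * (φ x - φ y) ≤ y - x := calc
    a * (φ x - φ y) ≤ |a| * |φ x - φ y| := by rw [← abs_mul]; exact le_abs_self _
    _ ≤ |a| * (K * |x - y|) := by gcongr; exact hLip x y
    _ = |a| * K * (y - x) := by rw [abs_sub_comm, abs_of_nonneg (sub_nonneg.2 hxy)]; ring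
    _ ≤ y - x := mul_le_of_le_one_left (sub_nonneg.2 hxy) ha
  dsimp only
  linarith

theorem abs_mul_le_one_of_mem_Ioo {K a : ℝ} (hK : 0 < K) (ha : a ∈ Ioo (-(1 / K)) (1 / K)) :
    |a| * K ≤ 1 :=
  (le_div_iff₀ hK).1 (abs_lt.2 ha).le

def CircleDeg1Lift.addMulPeriodic {φ : ℝ → ℝ} (hper : ∀ x, φ (x + 1) = φ x) (t a : ℝ)
    (hmono : Monotone fun x => x + t + a * φ x) : CircleDeg1Lift where
  toFun x := x + t + a * φ x
  monotone' := hmono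
  map_add_one' x := by rw [hper]; ring

theorem exists_pos_forall_add_le_of_slope {φ : ℝ → ℝ} {M m t₀ t a₀ a : ℝ}
    (hM : ∀ x, φ x ≤ M) (hm : ∀ x, m ≤ φ x)
    (h : (a₀ < a ∧ (t - t₀) / (a - a₀) < -M) ∨ (a < a₀ ∧ (t - t₀) / (a - a₀) > -m)) :
    ∃ ε > 0, ∀ x, x + t + a * φ x + ε ≤ x + t₀ + a₀ * φ x := by
  rcases h with ⟨ha, hs⟩ | ⟨ha, hs⟩
  · have hc : 0 < a - a₀ := sub_pos.2 ha
    have := (div_lt_iff₀ hc).1 hs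
    exact ⟨-(t - t₀) - M * (a - a₀), by linarith,
      fun x => by nlinarith [mul_le_mul_of_nonneg_left (hM x) hc.le]⟩
  · have hc : a - a₀ < 0 := sub_neg.2 ha
    have := (lt_div_iff_of_neg hc).1 hs
    exact ⟨-(t - t₀) - m * (a - a₀), by linarith,
      fun x => by nlinarith [mul_le_mul_of_nonpos_left (hm x) hc.le]⟩

theorem stmt_4 (φ : ℝ → ℝ) (K : ℝ) (hK : 0 < K)
    (hLip : ∀ x y : ℝ, |φ x - φ y| ≤ K * |x - y|)
    (hper : ∀ x : ℝ, φ (x + 1) = φ x)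
    (τ : ℝ → ℝ → ℝ)
    (hτ : ∀ t : ℝ, ∀ a ∈ Set.Ioo (-(1 / K)) (1 / K),
      IsTransNum (fun x => x + t + a * φ x) (τ t a))
    (t₀ t a₀ a : ℝ)
    (ha₀ : a₀ ∈ Set.Ioo (-(1 / K)) (1 / K)) (ha : a ∈ Set.Ioo (-(1 / K)) (1 / K)) :
    (((a₀ < a ∧ (t - t₀) / (a - a₀) < -sSup (Set.range φ)) ∨
      (a < a₀ ∧ (t - t₀) / (a - a₀) > -sInf (Set.range φ))) →
        τ t a ≤ τ t₀ a₀ ∧ (Irrational (τ t₀ a₀) → τ t a < τ t₀ a₀)) ∧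
    (((a₀ < a ∧ (t - t₀) / (a - a₀) > -sInf (Set.range φ)) ∨
      (a < a₀ ∧ (t - t₀) / (a - a₀) < -sSup (Set.range φ))) →
        τ t a ≥ τ t₀ a₀ ∧ (Irrational (τ t₀ a₀) → τ t a > τ t₀ a₀)) := by
  have hφ : Continuous φ :=
    (LipschitzWith.of_dist_le_mul (K := ⟨K, hK.le⟩) fun x y => hLip x y).continuous
  have hrange : IsCompact (range φ) := Function.Periodic.compact_of_continuous hper one_ne_zero hφ
  have hM x : φ x ≤ sSup (range φ) := le_csSup hrange.bddAbove (mem_range_self x)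
  have hm x : sInf (range φ) ≤ φ x := csInf_le hrange.bddBelow (mem_range_self x)
  have compare {s b s' b'} (hb : b ∈ Ioo (-(1 / K)) (1 / K)) (hb' : b' ∈ Ioo (-(1 / K)) (1 / K))
      (hε : ∃ ε > 0, ∀ x, x + s + b * φ x + ε ≤ x + s' + b' * φ x) :
      τ s b ≤ τ s' b' ∧ (Irrational (τ s b) ∨ Irrational (τ s' b') → τ s b < τ s' b') :=
    let ⟨_, hε, h⟩ := hε
    IsTransNum.le_and_lt_of_forall_add_le
      (f := .addMulPeriodic hper s b (monotone_add_add_mul_of_abs_mul_le_one hLip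
        (abs_mul_le_one_of_mem_Ioo hK hb) s))
      (g := .addMulPeriodic hper s' b' (monotone_add_add_mul_of_abs_mul_le_one hLip
        (abs_mul_le_one_of_mem_Ioo hK hb') s'))
      (hτ s b hb) (hτ s' b' hb') hε h
  refine ⟨fun h => ?_, fun h => ?_⟩
  · obtain ⟨hle, hlt⟩ := compare ha ha₀ (exists_pos_forall_add_le_of_slope hM hm h)
    exact ⟨hle, fun hirr => hlt (Or.inr hirr)⟩
  · rw [← neg_div_neg_eq, neg_sub, neg_sub, or_comm] at h
    obtain ⟨hle, hlt⟩ := compare ha₀ ha (exists_pos_forall_add_le_of_slope hM hm h)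
    exact ⟨hle, fun hirr => hlt (Or.inl hirr)⟩
end

section
/- For fixed a ∈ (−1/(2π), 1/(2π)), x ∈ ℝ and every integer q ≥ 1, the function t ↦ S_{t,a}^{∘q}(x) is differentiable and its derivative with respect to t is at least 1 at every t ∈ ℝ. -/
open Filter Topology Set

/-- The standard (Arnol'd) family. -/
noncomputable def stdFam (t a x : ℝ) : ℝ := x + t + a * Real.sin (2 * Real.pi * x)

theorem stmt_9 (a : ℝ) (ha : a ∈ Set.Ioo (-(1 / (2 * Real.pi))) (1 / (2 * Real.pi)))
    (x : ℝ) (q : ℕ) (hq : 1 ≤ q) :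
    ∀ t : ℝ,
      DifferentiableAt ℝ (fun s : ℝ => (stdFam s a)^[q] x) t ∧
      1 ≤ deriv (fun s : ℝ => (stdFam s a)^[q] x) t := by
  have hπ : (0:ℝ) < 2 * Real.pi := by positivity
  have h1 : a * (2 * Real.pi) < 1 := (lt_div_iff₀ hπ).mp ha.2
  have h2 : -1 < a * (2 * Real.pi) := by
    have := ha.1
    rw [neg_div'] at this
    exact (div_lt_iff₀ hπ).mp this
  have key : ∀ q : ℕ, ∀ t : ℝ, ∃ d : ℝ,
      HasDerivAt (fun s : ℝ => (stdFam s a)^[q] x) d t ∧ 0 ≤ d ∧ (1 ≤ q → 1 ≤ d) := by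
    intro q
    induction q with
    | zero =>
      intro t
      exact ⟨0, by simpa using (hasDerivAt_const t x), le_refl 0, by omega⟩
    | succ n ih =>
      intro t
      obtain ⟨d, hd, hd0, -⟩ := ih t
      set F : ℝ → ℝ := fun s => (stdFam s a)^[n] x with hF
      refine ⟨d + 1 + a * (Real.cos (2 * Real.pi * F t) * (2 * Real.pi * d)), ?_, ?_, ?_⟩
      · have heq : (fun s : ℝ => (stdFam s a)^[n+1] x)
            = fun s => F s + s + a * Real.sin (2 * Real.pi * F s) := by
          funext s
          rw [Function.iterate_succ_apply']
          rfl
        rw [heq]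
        exact (hd.add (hasDerivAt_id t)).add (((hd.const_mul (2*Real.pi)).sin).const_mul a)
      · have hc1 := Real.neg_one_le_cos (2 * Real.pi * F t)
        have hc2 := Real.cos_le_one (2 * Real.pi * F t)
        have hle : -1 ≤ a * (2 * Real.pi) * Real.cos (2 * Real.pi * F t) := by nlinarith
        nlinarith [mul_le_mul_of_nonneg_left hle hd0]
      · intro _
        have hc1 := Real.neg_one_le_cos (2 * Real.pi * F t)
        have hc2 := Real.cos_le_one (2 * Real.pi * F t)
        have hle : -1 ≤ a * (2 * Real.pi) * Real.cos (2 * Real.pi * F t) := by nlinarith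
        nlinarith [mul_le_mul_of_nonneg_left hle hd0]
  intro t
  obtain ⟨d, hd, -, hd1⟩ := key q t
  exact ⟨hd.differentiableAt, by rw [hd.deriv]; exact hd1 hq⟩
end

section
/- Let φ : ℝ → ℝ be Lipschitz with constant K > 0 and 1-periodic, and let p, q be coprime integers with q ≥ 1. Define Ψ(x,a,ε) := Σ_{k=0}^{q−1} [φ(F_{p/q+ε,a}^{∘k}(x)) − φ(x + kp/q)]. Then for all x ∈ ℝ, ε ∈ ℝ and a ∈ (−1/K, 1/K): F_{p/q+ε,a}^{∘q}(x) = x + p + qε + q·a·A_q(φ)(x) + a·Ψ(x,a,ε), Ψ is 1-periodic in x, Ψ(x,0,0) = 0 for all x, and Ψ is uniformly continuous on every set of the form ℝ × [−r,r] × [−r,r] with [−r,r] ⊂ (−1/K,1/K). -/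
open Filter Topology Set

/-- The family `F_{t,a} : x ↦ x + t + a·φ(x)`. -/
noncomputable def famF (φ : ℝ → ℝ) (t a x : ℝ) : ℝ := x + t + a * φ x

/-- The average `A_q(φ)` of the translates of `φ` by `p/q`. -/
noncomputable def avgA (φ : ℝ → ℝ) (p : ℤ) (q : ℕ) (x : ℝ) : ℝ :=
  (1 / (q : ℝ)) * ∑ k ∈ Finset.range q, φ (x + (k : ℝ) * (p : ℝ) / (q : ℝ))

/-- The error term `Ψ(x,a,ε) = Σ_{k<q} [φ(F_{p/q+ε,a}^{∘k}(x)) − φ(x + kp/q)]`. -/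
noncomputable def psiFun (φ : ℝ → ℝ) (p : ℤ) (q : ℕ) (x a ε : ℝ) : ℝ :=
  ∑ k ∈ Finset.range q,
    (φ ((famF φ ((p : ℝ) / (q : ℝ) + ε) a)^[k] x) - φ (x + (k : ℝ) * (p : ℝ) / (q : ℝ)))

lemma famF_iter_eq (φ : ℝ → ℝ) (t a : ℝ) : ∀ (n : ℕ) (x : ℝ),
    (famF φ t a)^[n] x = x + n * t + a * ∑ k ∈ Finset.range n, φ ((famF φ t a)^[k] x) := by
  intro n
  induction n with
  | zero => intro x; simp
  | succ n ih =>
    intro x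
    rw [Function.iterate_succ_apply', Finset.sum_range_succ]
    simp only [famF]
    rw [ih]
    push_cast
    ring

lemma famF_iter_add_one (φ : ℝ → ℝ) (hper : ∀ x : ℝ, φ (x + 1) = φ x) (t a : ℝ) (n : ℕ)
    (x : ℝ) : (famF φ t a)^[n] (x + 1) = (famF φ t a)^[n] x + 1 := by
  induction n with
  | zero => simp
  | succ n ih =>
    rw [Function.iterate_succ_apply', Function.iterate_succ_apply', ih, famF, famF, hper]
    ring

lemma famF_iter_a_zero (φ : ℝ → ℝ) (t : ℝ) (n : ℕ) (x : ℝ) :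
    (famF φ t 0)^[n] x = x + n * t := by
  induction n with
  | zero => simp
  | succ n ih =>
    rw [Function.iterate_succ_apply', ih, famF]
    push_cast
    ring

theorem stmt_10 (φ : ℝ → ℝ) (K : ℝ) (hK : 0 < K)
    (hLip : ∀ x y : ℝ, |φ x - φ y| ≤ K * |x - y|)
    (hper : ∀ x : ℝ, φ (x + 1) = φ x)
    (p : ℤ) (q : ℕ) (hq : 1 ≤ q) (hpq : Nat.Coprime p.natAbs q) :
    -- the expansion of the q-th iterate
    (∀ x ε : ℝ, ∀ a ∈ Set.Ioo (-(1 / K)) (1 / K),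
      (famF φ ((p : ℝ) / (q : ℝ) + ε) a)^[q] x =
        x + (p : ℝ) + (q : ℝ) * ε + (q : ℝ) * a * avgA φ p q x + a * psiFun φ p q x a ε) ∧
    -- Ψ is 1-periodic in x
    (∀ x a ε : ℝ, psiFun φ p q (x + 1) a ε = psiFun φ p q x a ε) ∧
    -- Ψ(x,0,0) = 0
    (∀ x : ℝ, psiFun φ p q x 0 0 = 0) ∧
    -- uniform continuity on ℝ × [−r,r] × [−r,r]
    (∀ r : ℝ, Set.Icc (-r) r ⊆ Set.Ioo (-(1 / K)) (1 / K) →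
      UniformContinuousOn (fun w : ℝ × ℝ × ℝ => psiFun φ p q w.1 w.2.1 w.2.2)
        (Set.univ ×ˢ Set.Icc (-r) r ×ˢ Set.Icc (-r) r)) := by
  have hq0 : (q : ℝ) ≠ 0 := Nat.cast_ne_zero.mpr (by omega)
  -- boundedness of φ
  have hb : ∀ x : ℝ, |φ x| ≤ |φ 0| + K := by
    intro x
    have hP : Function.Periodic φ 1 := hper
    have h1 : φ (Int.fract x) = φ x := by
      have := hP.sub_int_mul_eq (x := x) ⌊x⌋
      rw [mul_one] at this
      rw [Int.fract]
      exact this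
    have h2 : |φ (Int.fract x) - φ 0| ≤ K * |Int.fract x - 0| := hLip _ _
    have h3 : |Int.fract x - 0| ≤ 1 := by
      rw [sub_zero, abs_of_nonneg (Int.fract_nonneg x)]
      exact (Int.fract_lt_one x).le
    have h4 : K * |Int.fract x - 0| ≤ K * 1 :=
      mul_le_mul_of_nonneg_left h3 hK.le
    calc |φ x| = |(φ (Int.fract x) - φ 0) + φ 0| := by rw [h1]; ring_nf
      _ ≤ |φ (Int.fract x) - φ 0| + |φ 0| := abs_add_le _ _
      _ ≤ K * 1 + |φ 0| := add_le_add (h2.trans h4) le_rfl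
      _ = |φ 0| + K := by ring
  refine ⟨?_, ?_, ?_, ?_⟩
  · intro x ε a _
    rw [famF_iter_eq]
    unfold avgA psiFun
    rw [Finset.sum_sub_distrib]
    field_simp
    ring
  · intro x a ε
    unfold psiFun
    apply Finset.sum_congr rfl
    intro k _
    rw [famF_iter_add_one φ hper, hper]
    have : x + 1 + (k : ℝ) * (p : ℝ) / (q : ℝ) = (x + (k : ℝ) * (p : ℝ) / (q : ℝ)) + 1 := by
      ring
    rw [this, hper]
  · intro x
    unfold psiFun
    apply Finset.sum_eq_zero
    intro k _
    rw [famF_iter_a_zero]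
    have : x + (k : ℝ) * ((p : ℝ) / (q : ℝ) + 0) = x + (k : ℝ) * (p : ℝ) / (q : ℝ) := by ring
    rw [this, sub_self]
  · intro r hr
    set M : ℝ := |φ 0| + K with hM
    have hM0 : 0 < M := by positivity
    set R : ℝ := |r| with hR
    have hRK : 0 ≤ R * K := by positivity
    -- uniform Lipschitz bound on iterates
    have claim : ∀ n : ℕ, ∃ C : ℝ, 0 < C ∧ ∀ k ≤ n, ∀ x a ε x' a' ε' : ℝ, |a| ≤ R →
        |(famF φ ((p : ℝ) / (q : ℝ) + ε) a)^[k] x -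
          (famF φ ((p : ℝ) / (q : ℝ) + ε') a')^[k] x'| ≤
        C * (|x - x'| + |a - a'| + |ε - ε'|) := by
      intro n
      induction n with
      | zero =>
        refine ⟨1, one_pos, ?_⟩
        intro k hk x a ε x' a' ε' _
        interval_cases k
        simp only [Function.iterate_zero_apply, one_mul]
        have h1 : (0:ℝ) ≤ |a - a'| := abs_nonneg _
        have h2 : (0:ℝ) ≤ |ε - ε'| := abs_nonneg _
        linarith [le_refl |x - x'|]
      | succ n ih =>
        obtain ⟨C, hC, hCb⟩ := ih
        refine ⟨(1 + R * K) * C + M + 1, by positivity, ?_⟩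
        intro k hk x a ε x' a' ε' ha
        have hD : (0:ℝ) ≤ |x - x'| + |a - a'| + |ε - ε'| := by positivity
        rcases Nat.lt_or_ge k (n + 1) with hkn | hkn
        · calc |(famF φ ((p : ℝ) / (q : ℝ) + ε) a)^[k] x -
              (famF φ ((p : ℝ) / (q : ℝ) + ε') a')^[k] x'| ≤
              C * (|x - x'| + |a - a'| + |ε - ε'|) :=
                hCb k (by omega) x a ε x' a' ε' ha
            _ ≤ ((1 + R * K) * C + M + 1) * (|x - x'| + |a - a'| + |ε - ε'|) := by
              apply mul_le_mul_of_nonneg_right _ hD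
              nlinarith
        · have hk1 : k = n + 1 := by omega
          subst hk1
          set y := (famF φ ((p : ℝ) / (q : ℝ) + ε) a)^[n] x with hy
          set y' := (famF φ ((p : ℝ) / (q : ℝ) + ε') a')^[n] x' with hy'
          have hyy : |y - y'| ≤ C * (|x - x'| + |a - a'| + |ε - ε'|) :=
            hCb n (by omega) x a ε x' a' ε' ha
          rw [Function.iterate_succ_apply', Function.iterate_succ_apply']
          have key : |famF φ ((p : ℝ) / (q : ℝ) + ε) a y -
              famF φ ((p : ℝ) / (q : ℝ) + ε') a' y'| ≤
              |y - y'| + |ε - ε'| + (|a| * |φ y - φ y'| + |a - a'| * |φ y'|) := by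
            have h1 : famF φ ((p : ℝ) / (q : ℝ) + ε) a y -
                famF φ ((p : ℝ) / (q : ℝ) + ε') a' y' =
                (y - y') + (ε - ε') + (a * (φ y - φ y') + (a - a') * φ y') := by
              unfold famF; ring
            rw [h1]
            calc |(y - y') + (ε - ε') + (a * (φ y - φ y') + (a - a') * φ y')|
                ≤ |(y - y') + (ε - ε')| + |a * (φ y - φ y') + (a - a') * φ y'| := abs_add_le _ _
              _ ≤ (|y - y'| + |ε - ε'|) + (|a * (φ y - φ y')| + |(a - a') * φ y'|) :=
                  add_le_add (abs_add_le _ _) (abs_add_le _ _)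
              _ = |y - y'| + |ε - ε'| + (|a| * |φ y - φ y'| + |a - a'| * |φ y'|) := by
                  rw [abs_mul, abs_mul]
          have hphi : |φ y - φ y'| ≤ K * |y - y'| := hLip _ _
          have hb' : |φ y'| ≤ M := hb y'
          have h5 : |a| * |φ y - φ y'| ≤ R * (K * |y - y'|) :=
            mul_le_mul ha hphi (abs_nonneg _) (le_trans (abs_nonneg _) ha)
          have h6 : |a - a'| * |φ y'| ≤ |a - a'| * M :=
            mul_le_mul_of_nonneg_left hb' (abs_nonneg _)
          have hda : |a - a'| ≤ |x - x'| + |a - a'| + |ε - ε'| := by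
            have := abs_nonneg (x - x'); have := abs_nonneg (ε - ε'); linarith
          have hde : |ε - ε'| ≤ |x - x'| + |a - a'| + |ε - ε'| := by
            have := abs_nonneg (x - x'); have := abs_nonneg (a - a'); linarith
          calc |famF φ ((p : ℝ) / (q : ℝ) + ε) a y -
              famF φ ((p : ℝ) / (q : ℝ) + ε') a' y'|
              ≤ |y - y'| + |ε - ε'| + (|a| * |φ y - φ y'| + |a - a'| * |φ y'|) := key
            _ ≤ (1 + R * K) * |y - y'| + |ε - ε'| + M * |a - a'| := by nlinarith
            _ ≤ (1 + R * K) * (C * (|x - x'| + |a - a'| + |ε - ε'|)) +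
                (|x - x'| + |a - a'| + |ε - ε'|) + M * (|x - x'| + |a - a'| + |ε - ε'|) := by
                have := mul_le_mul_of_nonneg_left hyy (by positivity : (0:ℝ) ≤ 1 + R * K)
                nlinarith
            _ = ((1 + R * K) * C + M + 1) * (|x - x'| + |a - a'| + |ε - ε'|) := by ring
    obtain ⟨C, hC, hCb⟩ := claim q
    -- Lipschitz bound for Ψ on the strip
    have psiLip : ∀ x a ε x' a' ε' : ℝ, |a| ≤ R →
        |psiFun φ p q x a ε - psiFun φ p q x' a' ε'| ≤
        (q : ℝ) * (K * (C + 1)) * (|x - x'| + |a - a'| + |ε - ε'|) := by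
      intro x a ε x' a' ε' ha
      have hD : (0:ℝ) ≤ |x - x'| + |a - a'| + |ε - ε'| := by positivity
      unfold psiFun
      rw [← Finset.sum_sub_distrib]
      calc |∑ k ∈ Finset.range q,
            ((φ ((famF φ ((p : ℝ) / (q : ℝ) + ε) a)^[k] x) - φ (x + (k : ℝ) * (p : ℝ) / (q : ℝ))) -
             (φ ((famF φ ((p : ℝ) / (q : ℝ) + ε') a')^[k] x') - φ (x' + (k : ℝ) * (p : ℝ) / (q : ℝ))))|
          ≤ ∑ k ∈ Finset.range q,
            |(φ ((famF φ ((p : ℝ) / (q : ℝ) + ε) a)^[k] x) - φ (x + (k : ℝ) * (p : ℝ) / (q : ℝ))) -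
             (φ ((famF φ ((p : ℝ) / (q : ℝ) + ε') a')^[k] x') - φ (x' + (k : ℝ) * (p : ℝ) / (q : ℝ)))| :=
            Finset.abs_sum_le_sum_abs _ _
        _ ≤ ∑ _k ∈ Finset.range q, (K * (C + 1)) * (|x - x'| + |a - a'| + |ε - ε'|) := by
            apply Finset.sum_le_sum
            intro k hk
            have h1 : |φ ((famF φ ((p : ℝ) / (q : ℝ) + ε) a)^[k] x) -
                φ ((famF φ ((p : ℝ) / (q : ℝ) + ε') a')^[k] x')| ≤
                K * (C * (|x - x'| + |a - a'| + |ε - ε'|)) := by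
              refine le_trans (hLip _ _) ?_
              exact mul_le_mul_of_nonneg_left
                (hCb k (Finset.mem_range.mp hk).le x a ε x' a' ε' ha) hK.le
            have h2 : |φ (x + (k : ℝ) * (p : ℝ) / (q : ℝ)) -
                φ (x' + (k : ℝ) * (p : ℝ) / (q : ℝ))| ≤ K * |x - x'| := by
              refine le_trans (hLip _ _) ?_
              have h3 : x + (k : ℝ) * (p : ℝ) / (q : ℝ) -
                  (x' + (k : ℝ) * (p : ℝ) / (q : ℝ)) = x - x' := by ring
              rw [h3]
            have hdx : |x - x'| ≤ |x - x'| + |a - a'| + |ε - ε'| := by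
              have := abs_nonneg (a - a'); have := abs_nonneg (ε - ε'); linarith
            calc |(φ ((famF φ ((p : ℝ) / (q : ℝ) + ε) a)^[k] x) -
                  φ (x + (k : ℝ) * (p : ℝ) / (q : ℝ))) -
                 (φ ((famF φ ((p : ℝ) / (q : ℝ) + ε') a')^[k] x') -
                  φ (x' + (k : ℝ) * (p : ℝ) / (q : ℝ)))|
                = |(φ ((famF φ ((p : ℝ) / (q : ℝ) + ε) a)^[k] x) -
                    φ ((famF φ ((p : ℝ) / (q : ℝ) + ε') a')^[k] x')) -
                   (φ (x + (k : ℝ) * (p : ℝ) / (q : ℝ)) -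
                    φ (x' + (k : ℝ) * (p : ℝ) / (q : ℝ)))| := by ring_nf
              _ ≤ |φ ((famF φ ((p : ℝ) / (q : ℝ) + ε) a)^[k] x) -
                    φ ((famF φ ((p : ℝ) / (q : ℝ) + ε') a')^[k] x')| +
                  |φ (x + (k : ℝ) * (p : ℝ) / (q : ℝ)) -
                    φ (x' + (k : ℝ) * (p : ℝ) / (q : ℝ))| := abs_sub _ _
              _ ≤ K * (C * (|x - x'| + |a - a'| + |ε - ε'|)) + K * |x - x'| :=
                  add_le_add h1 h2
              _ ≤ (K * (C + 1)) * (|x - x'| + |a - a'| + |ε - ε'|) := by nlinarith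
        _ = (q : ℝ) * (K * (C + 1)) * (|x - x'| + |a - a'| + |ε - ε'|) := by
            rw [Finset.sum_const, Finset.card_range, nsmul_eq_mul]; ring
    -- conclude uniform continuity
    set L : ℝ := (q : ℝ) * (K * (C + 1)) with hL
    have hq0' : (0:ℝ) < (q:ℝ) := by
      exact_mod_cast Nat.pos_of_ne_zero (by omega)
    have hL0 : 0 < L := by positivity
    rw [Metric.uniformContinuousOn_iff]
    intro δ hδ
    refine ⟨δ / (3 * L + 1), by positivity, ?_⟩
    rintro ⟨x, a, ε⟩ hw ⟨x', a', ε'⟩ hw' hd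
    simp only [Set.mem_prod, Set.mem_univ, Set.mem_Icc, true_and] at hw hw'
    have ha : |a| ≤ R := by
      rw [abs_le]
      constructor
      · exact le_trans (by rw [hR]; exact neg_le_neg (le_abs_self r)) hw.1.1
      · exact le_trans hw.1.2 (le_abs_self r)
    have key := psiLip x a ε x' a' ε' ha
    simp only [Prod.dist_eq, Real.dist_eq] at hd ⊢
    have hdx : |x - x'| ≤ max |x - x'| (max |a - a'| |ε - ε'|) := le_max_left _ _
    have hda : |a - a'| ≤ max |x - x'| (max |a - a'| |ε - ε'|) :=
      le_trans (le_max_left _ _) (le_max_right _ _)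
    have hde : |ε - ε'| ≤ max |x - x'| (max |a - a'| |ε - ε'|) :=
      le_trans (le_max_right _ _) (le_max_right _ _)
    have hsum : |x - x'| + |a - a'| + |ε - ε'| ≤
        3 * max |x - x'| (max |a - a'| |ε - ε'|) := by linarith
    calc |psiFun φ p q x a ε - psiFun φ p q x' a' ε'|
        ≤ L * (|x - x'| + |a - a'| + |ε - ε'|) := key
      _ ≤ L * (3 * max |x - x'| (max |a - a'| |ε - ε'|)) :=
          mul_le_mul_of_nonneg_left hsum hL0.le
      _ < L * (3 * (δ / (3 * L + 1))) := by
          apply mul_lt_mul_of_pos_left _ hL0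
          apply mul_lt_mul_of_pos_left _ (by norm_num)
          exact hd
      _ ≤ δ := by
          have h31 : (0:ℝ) < 3 * L + 1 := by positivity
          rw [div_eq_mul_inv]
          have heq : L * (3 * (δ * (3 * L + 1)⁻¹)) = δ * ((3 * L) / (3 * L + 1)) := by
            field_simp
          rw [heq]
          calc δ * ((3 * L) / (3 * L + 1)) ≤ δ * 1 := by
                apply mul_le_mul_of_nonneg_left _ hδ.le
                rw [div_le_one h31]; linarith
            _ = δ := mul_one δ
end

section
/- Let φ : ℝ → ℝ be Lipschitz with constant K > 0 and 1-periodic, let α be irrational, and let γ_α(a) denote the unique t with Trans(F_{t,a}) = α. Then γ_α(a) = α − M(φ)·a + o(a) as a → 0, i.e. lim_{a→0} (γ_α(a) − α)/a = −∫₀¹ φ(x) dx. -/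
open Filter Topology Set

/-!
Let `F x = x + t + a φ x` with `t = γ a`, so that `α` is the translation number of `F`. Since
`F^[n] 0 = n t + a ∑_{k<n} φ (F^[k] 0)`, the Birkhoff averages of `φ` along the orbit of `0`
converge to `(α - t) / a`, so it suffices to show that they are close to `∫₀¹ φ` when `a` is small.
As `|t - α| = O(a)`, the first `m` points of every orbit of `F` lie within `O(m² a)` of those of
the rotation by `α`, and for irrational `α` the averages of `φ` over `m` consecutive rotation
points are uniformly close to `∫₀¹ φ` once `m` is large: take a good approximation `p / m` of
`α` in lowest terms, so that these points are, up to `O(1/m)`, a permutation of the Riemann-sum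
nodes `x + j / m`. Cutting a long orbit into blocks of length `m` concludes.
-/

open Finset Function
open scoped NNReal

lemma LipschitzWith.abs_integral_sub_mul_le {φ : ℝ → ℝ} {K : ℝ≥0} (hφ : LipschitzWith K φ)
    (y : ℝ) {h : ℝ} (hh : 0 ≤ h) :
    |(∫ t in y..y + h, φ t) - h * φ y| ≤ K * h ^ 2 := by
  have hint : IntervalIntegrable φ MeasureTheory.volume y (y + h) :=
    hφ.continuous.intervalIntegrable _ _
  have hclose : ∀ t ∈ uIoc y (y + h), ‖φ t - φ y‖ ≤ K * h := fun t ht => by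
    rw [uIoc_of_le (by linarith)] at ht
    rw [Real.norm_eq_abs, ← Real.dist_eq]
    refine (hφ.dist_le_mul t y).trans (mul_le_mul_of_nonneg_left ?_ K.coe_nonneg)
    rw [Real.dist_eq, abs_of_nonneg (by linarith [ht.1])]
    linarith [ht.2]
  have := intervalIntegral.norm_integral_le_of_norm_le_const hclose
  rwa [intervalIntegral.integral_sub hint intervalIntegrable_const, intervalIntegral.integral_const,
    smul_eq_mul, add_sub_cancel_left, abs_of_nonneg hh, Real.norm_eq_abs, mul_assoc, ← sq] at this

lemma LipschitzWith.abs_sum_sub_integral_le {φ : ℝ → ℝ} {K : ℝ≥0} (hφ : LipschitzWith K φ)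
    {m : ℕ} (hm : 0 < m) (x : ℝ) :
    |∑ j ∈ range m, φ (x + j / m) - m * ∫ t in x..x + 1, φ t| ≤ K := by
  have hm' : (0 : ℝ) < m := Nat.cast_pos.2 hm
  have hsplit :
      ∫ t in x..x + 1, φ t = ∑ j ∈ range m, ∫ t in x + j / m..x + j / m + 1 / m, φ t := by
    have h := intervalIntegral.sum_integral_adjacent_intervals (a := fun j : ℕ => x + j / m)
      (n := m) (μ := MeasureTheory.volume) (f := φ)
      (fun k _ => hφ.continuous.intervalIntegrable _ _)
    simp only [Nat.cast_zero, zero_div, add_zero, div_self hm'.ne', Nat.cast_succ, add_div,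
      ← add_assoc] at h
    exact h.symm
  have hcell : ∀ j ∈ range m,
      |(∫ t in x + j / m..x + j / m + 1 / m, φ t) - 1 / m * φ (x + j / m)| ≤ K / m ^ 2 := fun j _ =>
    (hφ.abs_integral_sub_mul_le _ (by positivity)).trans_eq (by ring)
  have hrearrange : ∑ j ∈ range m, φ (x + j / m) - m * ∫ t in x..x + 1, φ t
      = -(m * ∑ j ∈ range m,
          ((∫ t in x + j / m..x + j / m + 1 / m, φ t) - 1 / m * φ (x + j / m))) := by
    rw [hsplit, mul_sum, mul_sum, ← sum_sub_distrib, ← sum_neg_distrib]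
    refine sum_congr rfl fun j _ => ?_
    field_simp
    ring
  calc |∑ j ∈ range m, φ (x + j / m) - m * ∫ t in x..x + 1, φ t|
      ≤ m * ∑ j ∈ range m, (K / m ^ 2 : ℝ) := by
        rw [hrearrange, abs_neg, abs_mul, abs_of_pos hm']
        exact mul_le_mul_of_nonneg_left ((abs_sum_le_sum_abs _ _).trans (sum_le_sum hcell)) hm'.le
    _ = K := by
        rw [sum_const, card_range, nsmul_eq_mul]
        field_simp

lemma ZMod.sum_range_natCast {M : Type*} [AddCommMonoid M] (m : ℕ) [NeZero m] (f : ZMod m → M) :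
    ∑ i ∈ range m, f i = ∑ z : ZMod m, f z :=
  sum_nbij' (↑) ZMod.val (fun _ _ => mem_univ _) (fun z _ => mem_range.2 z.val_lt)
    (fun _ hi => ZMod.val_cast_of_lt (mem_range.1 hi)) (fun z _ => ZMod.natCast_zmod_val z)
    (fun _ _ => rfl)

lemma Function.Periodic.sum_range_add_mul_div_eq {φ : ℝ → ℝ} (hper : Periodic φ 1) {m : ℕ}
    [NeZero m] {p : ℤ} (hp : IsCoprime p m) (x : ℝ) :
    ∑ i ∈ range m, φ (x + i * p / m) = ∑ j ∈ range m, φ (x + j / m) := by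
  set g : ZMod m → ℝ := fun z => φ (x + z.val / m)
  have hm : (m : ℝ) ≠ 0 := Nat.cast_ne_zero.2 (NeZero.ne m)
  have hg : ∀ k : ℤ, φ (x + k / m) = g k := fun k => by
    have hk : (k : ℝ) / m = ((k : ZMod m).val : ℝ) / m + (k / m : ℤ) * 1 := by
      have h := congrArg (fun z : ℤ => (z : ℝ)) (Int.emod_add_mul_ediv k m)
      rw [← ZMod.val_intCast] at h
      push_cast at h
      field_simp
      linarith
    rw [hk, ← add_assoc, hper.int_mul]
  calc ∑ i ∈ range m, φ (x + i * p / m)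
      = ∑ i ∈ range m, g (i * p) := sum_congr rfl fun i _ => by simpa using hg (i * p)
    _ = ∑ z : ZMod m, g z := by
        rw [ZMod.sum_range_natCast m (fun z => g (z * p))]
        exact Equiv.sum_comp (Units.mulRight (ZMod.unitOfIsCoprime p hp)) g
    _ = ∑ j ∈ range m, φ (x + j / m) := by
        rw [← ZMod.sum_range_natCast]
        exact sum_congr rfl fun j _ => by simpa using (hg j).symm

lemma LipschitzWith.abs_sum_sub_sum_le {φ : ℝ → ℝ} {K : ℝ≥0} (hφ : LipschitzWith K φ)
    {u v : ℕ → ℝ} {m : ℕ} {δ : ℝ} (h : ∀ i < m, |u i - v i| ≤ δ) :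
    |∑ i ∈ range m, φ (u i) - ∑ i ∈ range m, φ (v i)| ≤ m * (K * δ) := by
  rw [← sum_sub_distrib]
  refine (abs_sum_le_sum_abs _ _).trans ?_
  calc ∑ i ∈ range m, |φ (u i) - φ (v i)| ≤ ∑ _i ∈ range m, K * δ := by
        refine sum_le_sum fun i hi => ?_
        rw [← Real.dist_eq]
        refine (hφ.dist_le_mul _ _).trans (mul_le_mul_of_nonneg_left ?_ K.coe_nonneg)
        rw [Real.dist_eq]
        exact h i (mem_range.1 hi)
    _ = m * (K * δ) := by rw [sum_const, card_range, nsmul_eq_mul]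

lemma Irrational.exists_rat_abs_sub_le_and_lt_den {ξ : ℝ} (hξ : Irrational ξ) (N : ℕ) :
    ∃ q : ℚ, |ξ - q| ≤ 1 / (q.den : ℝ) ^ 2 ∧ N < q.den := by
  -- for such `n`, Dirichlet's theorem cannot return a denominator `≤ N`
  have hfar : ∀ᶠ n : ℕ in atTop,
      ∀ k ∈ Finset.Icc 1 N, 1 / ((n : ℝ) + 1) < |k * ξ - round (k * ξ)| := by
    refine (eventually_all_finset _).2 fun k hk => ?_
    have hk0 : k ≠ 0 := (Nat.one_le_iff_ne_zero.1 (Finset.mem_Icc.1 hk).1)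
    have hpos : 0 < |k * ξ - round (k * ξ)| :=
      abs_pos.2 (sub_ne_zero.2 ((hξ.natCast_mul hk0).ne_int _))
    exact tendsto_one_div_add_atTop_nhds_zero_nat.eventually (gt_mem_nhds hpos)
  obtain ⟨n, hn, hnpos⟩ := (hfar.and (eventually_gt_atTop 0)).exists
  obtain ⟨q, hq, hqn⟩ := Real.exists_rat_abs_sub_le_and_den_le ξ hnpos
  have hden : (0 : ℝ) < q.den := Nat.cast_pos.2 q.pos
  have hqn' : (q.den : ℝ) ≤ n := Nat.cast_le.2 hqn
  refine ⟨q, hq.trans ?_, ?_⟩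
  · rw [sq]
    exact one_div_le_one_div_of_le (by positivity) (by nlinarith)
  · by_contra! hle
    have hmul : |q.den * ξ - q.num| ≤ 1 / ((n : ℝ) + 1) := by
      rw [show (q.den : ℝ) * ξ - q.num = q.den * (ξ - q) by
        rw [mul_sub, ← Rat.cast_natCast, ← Rat.cast_mul, Rat.den_mul_eq_num]; push_cast; ring]
      rw [abs_mul, abs_of_pos hden]
      calc (q.den : ℝ) * |ξ - q| ≤ q.den * (1 / ((n + 1) * q.den)) :=
            mul_le_mul_of_nonneg_left hq hden.le
        _ = 1 / ((n : ℝ) + 1) := by field_simp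
    have := hn q.den (Finset.mem_Icc.2 ⟨q.pos, hle⟩)
    linarith [round_le (q.den * ξ) q.num]

lemma Irrational.exists_abs_sum_add_mul_sub_integral_le {α : ℝ} (hα : Irrational α) {φ : ℝ → ℝ}
    {K : ℝ≥0} (hφ : LipschitzWith K φ) (hper : Periodic φ 1) {ε : ℝ} (hε : 0 < ε) :
    ∃ m : ℕ, 0 < m ∧
      ∀ x, |∑ i ∈ range m, φ (x + i * α) - m * ∫ t in (0 : ℝ)..1, φ t| ≤ m * ε := by
  obtain ⟨q, hq, hqN⟩ := hα.exists_rat_abs_sub_le_and_lt_den ⌈2 * K / ε⌉₊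
  set m := q.den
  have : NeZero m := ⟨q.den_nz⟩
  have hm : (0 : ℝ) < m := Nat.cast_pos.2 q.pos
  have hcop : IsCoprime q.num (m : ℤ) := Int.isCoprime_iff_gcd_eq_one.2 q.reduced
  have hmε : 2 * K ≤ m * ε := by
    have := (Nat.le_ceil (2 * K / ε)).trans (Nat.cast_le.2 hqN.le)
    rwa [div_le_iff₀ hε] at this
  refine ⟨m, q.pos, fun x => ?_⟩
  have hclose : ∀ i < m, |(x + i * α) - (x + i * q.num / m)| ≤ 1 / m := fun i hi => by
    have hi' : (i : ℝ) ≤ m := Nat.cast_le.2 hi.le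
    rw [show x + i * α - (x + i * q.num / m) = i * (α - q) by rw [Rat.cast_def]; ring, abs_mul,
      Nat.abs_cast]
    calc (i : ℝ) * |α - q| ≤ m * (1 / m ^ 2) := mul_le_mul hi' hq (abs_nonneg _) hm.le
      _ = 1 / m := by field_simp
  have hrot := (hφ.abs_sum_sub_sum_le hclose).trans_eq (show (m : ℝ) * (K * (1 / m)) = K by
    field_simp)
  rw [hper.sum_range_add_mul_div_eq hcop x] at hrot
  have hriemann := hφ.abs_sum_sub_integral_le q.pos x
  rw [hper.intervalIntegral_add_eq x 0, zero_add] at hriemann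
  linarith [abs_sub_le (∑ i ∈ range m, φ (x + i * α)) (∑ j ∈ range m, φ (x + j / m))
    (m * ∫ t in (0 : ℝ)..1, φ t)]

lemma abs_birkhoffAverage_le {X : Type*} {f : X → X} {g : X → ℝ} {C : ℝ} (hC : ∀ x, |g x| ≤ C)
    (n : ℕ) (x : X) : |birkhoffAverage ℝ f g n x| ≤ C := by
  rw [birkhoffAverage, smul_eq_mul, abs_mul, abs_inv, Nat.abs_cast]
  rcases n.eq_zero_or_pos with rfl | hn
  · simpa using (abs_nonneg _).trans (hC x)
  · rw [inv_mul_le_iff₀ (by positivity)]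
    exact (abs_sum_le_sum_abs _ _).trans
      ((sum_le_sum fun i _ => hC (f^[i] x)).trans_eq (by simp))

lemma abs_birkhoffSum_mul_sub_le {X : Type*} {f : X → X} {g : X → ℝ} {m : ℕ} {c η : ℝ}
    (h : ∀ y, |birkhoffSum f g m y - m * c| ≤ m * η) (J : ℕ) (y : X) :
    |birkhoffSum f g (J * m) y - (J * m : ℕ) * c| ≤ (J * m : ℕ) * η := by
  induction J generalizing y with
  | zero => simp
  | succ J ih =>
    rw [add_mul, one_mul, birkhoffSum_add, Nat.cast_add]
    calc |birkhoffSum f g (J * m) y + birkhoffSum f g m (f^[J * m] y) - ((J * m : ℕ) + m) * c|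
        = |(birkhoffSum f g (J * m) y - (J * m : ℕ) * c)
            + (birkhoffSum f g m (f^[J * m] y) - m * c)| := by ring_nf
      _ ≤ (J * m : ℕ) * η + m * η := (abs_add_le _ _).trans (add_le_add (ih y) (h _))
      _ = ((J * m : ℕ) + m) * η := by ring

lemma abs_iterate_sub_add_mul_le {F : ℝ → ℝ} {α δ : ℝ} (hF : ∀ y, |F y - (y + α)| ≤ δ)
    (n : ℕ) (y : ℝ) : |F^[n] y - (y + n * α)| ≤ n * δ := by
  induction n with
  | zero => simp
  | succ n ih =>
    rw [iterate_succ_apply', Nat.cast_succ]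
    calc |F (F^[n] y) - (y + (n + 1) * α)|
        = |(F (F^[n] y) - (F^[n] y + α)) + (F^[n] y - (y + n * α))| := by ring_nf
      _ ≤ δ + n * δ := (abs_add_le _ _).trans (add_le_add (hF _) ih)
      _ = (n + 1) * δ := by ring

lemma iterate_sub_self_eq_birkhoffSum {φ F : ℝ → ℝ} {t a : ℝ} (hF : ∀ x, F x = x + t + a * φ x)
    (n : ℕ) (x : ℝ) : F^[n] x - x = n * t + a * birkhoffSum F φ n x := by
  induction n with
  | zero => simp
  | succ n ih =>
    rw [iterate_succ_apply', hF, birkhoffSum_succ, Nat.cast_succ]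
    linear_combination ih

lemma tendsto_birkhoffAverage_of_isTransNum {φ F : ℝ → ℝ} {t a ρ : ℝ}
    (hF : ∀ x, F x = x + t + a * φ x) (ha : a ≠ 0) (hρ : IsTransNum F ρ) (x : ℝ) :
    Tendsto (fun n => birkhoffAverage ℝ F φ n x) atTop (𝓝 ((ρ - t) / a)) := by
  refine (((hρ x).sub_const t).div_const a).congr' ?_
  filter_upwards [eventually_ne_atTop 0] with n hn
  rw [iterate_sub_self_eq_birkhoffSum hF, birkhoffAverage, smul_eq_mul]
  field_simp
  ring

lemma abs_div_sub_le_of_isTransNum {φ F : ℝ → ℝ} {K : ℝ≥0} {t a ρ C M ε : ℝ} {m : ℕ}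
    (hF : ∀ x, F x = x + t + a * φ x) (hφ : LipschitzWith K φ) (hC : ∀ x, |φ x| ≤ C)
    (hm : 0 < m) (hequi : ∀ x, |∑ i ∈ range m, φ (x + i * ρ) - m * M| ≤ m * ε)
    (ha : a ≠ 0) (hρ : IsTransNum F ρ) :
    |(ρ - t) / a - M| ≤ ε + K * (m * (2 * |a| * C)) := by
  set η := ε + K * (m * (2 * |a| * C)) with hη
  have hlim := tendsto_birkhoffAverage_of_isTransNum hF ha hρ 0
  have hmean : |(ρ - t) / a| ≤ C :=
    le_of_tendsto' (continuous_abs.tendsto _ |>.comp hlim) (abs_birkhoffAverage_le hC · 0)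
  have hstep : ∀ y, |F y - (y + ρ)| ≤ 2 * |a| * C := fun y => by
    rw [hF, show y + t + a * φ y - (y + ρ) = a * (φ y - (ρ - t) / a) by field_simp; ring, abs_mul]
    have := (abs_sub _ _).trans (add_le_add (hC y) hmean)
    nlinarith [abs_nonneg a]
  have hblock : ∀ y, |birkhoffSum F φ m y - m * M| ≤ m * η := fun y => by
    have hdrift : ∀ i < m, |F^[i] y - (y + i * ρ)| ≤ m * (2 * |a| * C) := fun i hi =>
      (abs_iterate_sub_add_mul_le hstep i y).trans
        (mul_le_mul_of_nonneg_right (Nat.cast_le.2 hi.le) ((abs_nonneg _).trans (hstep y)))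
    calc |birkhoffSum F φ m y - m * M|
        ≤ |birkhoffSum F φ m y - ∑ i ∈ range m, φ (y + i * ρ)|
          + |∑ i ∈ range m, φ (y + i * ρ) - m * M| := abs_sub_le _ _ _
      _ ≤ m * (K * (m * (2 * |a| * C))) + m * ε :=
        add_le_add (hφ.abs_sum_sub_sum_le hdrift) (hequi y)
      _ = m * η := by rw [hη]; ring
  have havg : ∀ J : ℕ, 0 < J → dist (birkhoffAverage ℝ F φ (J * m) 0) M ≤ η := fun J hJ => by
    have hJm : (0 : ℝ) < (J * m : ℕ) := Nat.cast_pos.2 (Nat.mul_pos hJ hm)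
    rw [Real.dist_eq, birkhoffAverage, smul_eq_mul, ← mul_le_mul_iff_of_pos_left hJm,
      ← abs_of_pos hJm, ← abs_mul, abs_of_pos hJm, mul_sub, mul_inv_cancel_left₀ hJm.ne']
    exact abs_birkhoffSum_mul_sub_le hblock J 0
  rw [← Real.dist_eq]
  exact le_of_tendsto ((hlim.comp (tendsto_id.atTop_mul_const' hm)).dist tendsto_const_nhds)
    ((eventually_gt_atTop 0).mono havg)

theorem stmt_11 (φ : ℝ → ℝ) (K : ℝ) (hK : 0 < K)
    (hLip : ∀ x y : ℝ, |φ x - φ y| ≤ K * |x - y|)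
    (hper : ∀ x : ℝ, φ (x + 1) = φ x)
    (τ : ℝ → ℝ → ℝ)
    (hτ : ∀ t : ℝ, ∀ a ∈ Set.Ioo (-(1 / K)) (1 / K),
      IsTransNum (fun x => x + t + a * φ x) (τ t a))
    (α : ℝ) (hα : Irrational α)
    (γ : ℝ → ℝ) (hγ : ∀ a ∈ Set.Ioo (-(1 / K)) (1 / K), τ (γ a) a = α) :
    Filter.Tendsto (fun a : ℝ => (γ a - α) / a) (nhdsWithin 0 {0}ᶜ)
      (nhds (-∫ x in (0 : ℝ)..1, φ x)) := by
  set K' : ℝ≥0 := ⟨K, hK.le⟩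
  have hφ : LipschitzWith K' φ :=
    LipschitzWith.of_dist_le_mul fun x y => by rw [Real.dist_eq, Real.dist_eq]; exact hLip x y
  have hφper : Periodic φ 1 := hper
  obtain ⟨C, hCnorm⟩ := (hφper.isBounded_of_continuous one_ne_zero hφ.continuous).exists_norm_le
  have hC : ∀ x, |φ x| ≤ C := fun x => hCnorm _ (mem_range_self x)
  rw [Metric.tendsto_nhds]
  intro ε hε
  obtain ⟨m, hm, hequi⟩ := hα.exists_abs_sum_add_mul_sub_integral_le hφ hφper (half_pos hε)
  have hsmall : ∀ᶠ a in 𝓝 (0 : ℝ), K' * (m * (2 * |a| * C)) < ε / 2 :=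
    ((by fun_prop : Continuous fun a : ℝ => K' * (m * (2 * |a| * C))).tendsto' 0 0
      (by simp)).eventually (gt_mem_nhds (half_pos hε))
  have hJ : Ioo (-(1 / K)) (1 / K) ∈ 𝓝 (0 : ℝ) :=
    Ioo_mem_nhds (by simpa using hK) (by positivity)
  filter_upwards [nhdsWithin_le_nhds hsmall, nhdsWithin_le_nhds hJ, self_mem_nhdsWithin]
    with a hsmall haJ ha0
  have hρ : IsTransNum (fun x => x + γ a + a * φ x) α := hγ a haJ ▸ hτ (γ a) a haJ
  have := abs_div_sub_le_of_isTransNum (fun _ => rfl) hφ hC hm hequi ha0 hρ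
  rw [Real.dist_eq, show (γ a - α) / a - -∫ x in (0 : ℝ)..1, φ x
    = -((α - γ a) / a - ∫ x in (0 : ℝ)..1, φ x) by ring, abs_neg]
  linarith
end

section
/- Let φ : ℝ → ℝ be Lipschitz with constant K > 0 and 1-periodic, let p, q be coprime with q ≥ 1, set M_A = sup A_q(φ) and m_A = inf A_q(φ), and define γ^−_{p/q}(a) = γ^l_{p/q}(a) for a ≥ 0 and γ^−_{p/q}(a) = γ^r_{p/q}(a) for a < 0, and γ^+_{p/q}(a) = γ^r_{p/q}(a) for a ≥ 0 and γ^+_{p/q}(a) = γ^l_{p/q}(a) for a < 0. Then γ^−_{p/q}(a) = p/q − M_A·a + o(a) and γ^+_{p/q}(a) = p/q − m_A·a + o(a) as a → 0; that is, lim_{a→0} (γ^−_{p/q}(a) − p/q)/a = −M_A and lim_{a→0} (γ^+_{p/q}(a) − p/q)/a = −m_A. -/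
/-!
For `|a| K ≤ 1` the map `F_{t,a}` lifts an orientation preserving circle homeomorphism, so
`Trans(F_{t,a}) = p/q` exactly when some orbit closes up, `F_{t,a}^q x = x + p`. Along such an
orbit `F_{t,a}^k x` stays `O(a)`-close to the rigid orbit `x + k p/q`, so by the Lipschitz bound
the identity `F_{t,a}^q x - x = q t + a Σ_{k<q} φ(F_{t,a}^k x)` gives
`t = p/q - a A_q(φ)(x) + O(a²)`. Conversely, by the intermediate value theorem in `t`, every `x`
starts such an orbit for some `t`. Hence the fibre `{t : Trans(F_{t,a}) = p/q}` is `O(a²)`-close,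
in Hausdorff distance, to the set of values `p/q - a A_q(φ)(x)`, whose infimum and supremum are
`p/q - a M_A` and `p/q - a m_A` in an order fixed by the sign of `a`.
-/

open Filter Topology Set

lemma Finset.abs_sum_le_card_mul {ι : Type*} (s : Finset ι) {f : ι → ℝ} {C : ℝ}
    (h : ∀ i ∈ s, |f i| ≤ C) : |∑ i ∈ s, f i| ≤ s.card * C := by
  refine (Finset.abs_sum_le_sum_abs _ _).trans ?_
  simpa using Finset.sum_le_card_nsmul s _ C h

lemma continuous_of_abs_sub_le {f : ℝ → ℝ} {K : ℝ} (h : ∀ x y, |f x - f y| ≤ K * |x - y|) :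
    Continuous f :=
  (LipschitzWith.of_dist_le_mul (K := K.toNNReal) fun x y =>
    (h x y).trans (mul_le_mul_of_nonneg_right (Real.le_coe_toNNReal K) (abs_nonneg _))).continuous

lemma CircleDeg1Lift.translationNumber_eq_of_isTransNum (f : CircleDeg1Lift) {τ : ℝ}
    (h : IsTransNum f τ) : f.translationNumber = τ :=
  tendsto_nhds_unique (by simpa only [CircleDeg1Lift.coe_pow] using f.tendsto_translationNumber 0)
    (h 0)

section

variable {ι : Type*} [Nonempty ι] {S : Set ℝ} {A : ι → ℝ} {a c δ : ℝ}

lemma abs_csInf_sub_le_of_pos (hA : BddAbove (range A)) (ha : 0 < a)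
    (h₁ : ∀ t ∈ S, ∃ i, |t - (c - a * A i)| ≤ δ) (h₂ : ∀ i, ∃ t ∈ S, |t - (c - a * A i)| ≤ δ) :
    |sInf S - (c - a * sSup (range A))| ≤ δ := by
  have hAM i : A i ≤ sSup (range A) := le_csSup hA (mem_range_self i)
  have hlow : ∀ t ∈ S, c - a * sSup (range A) - δ ≤ t := fun t ht => by
    obtain ⟨i, hi⟩ := h₁ t ht
    nlinarith [abs_le.1 hi, hAM i]
  obtain ⟨t₀, ht₀, -⟩ := h₂ (Classical.arbitrary ι)
  have hup : sSup (range A) ≤ (c + δ - sInf S) / a := by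
    refine csSup_le (range_nonempty A) (forall_mem_range.2 fun i => ?_)
    obtain ⟨t, ht, hti⟩ := h₂ i
    rw [le_div_iff₀ ha]
    linarith [csInf_le ⟨_, hlow⟩ ht, (abs_le.1 hti).2]
  rw [le_div_iff₀ ha] at hup
  exact abs_le.2 ⟨by linarith [le_csInf ⟨t₀, ht₀⟩ hlow], by linarith⟩

lemma abs_csSup_sub_le_of_neg (hA : BddAbove (range A)) (ha : a < 0)
    (h₁ : ∀ t ∈ S, ∃ i, |t - (c - a * A i)| ≤ δ) (h₂ : ∀ i, ∃ t ∈ S, |t - (c - a * A i)| ≤ δ) :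
    |sSup S - (c - a * sSup (range A))| ≤ δ := by
  have hAM i : A i ≤ sSup (range A) := le_csSup hA (mem_range_self i)
  have hup : ∀ t ∈ S, t ≤ c - a * sSup (range A) + δ := fun t ht => by
    obtain ⟨i, hi⟩ := h₁ t ht
    nlinarith [abs_le.1 hi, hAM i]
  obtain ⟨t₀, ht₀, -⟩ := h₂ (Classical.arbitrary ι)
  have hlow : sSup (range A) ≤ (c - δ - sSup S) / a := by
    refine csSup_le (range_nonempty A) (forall_mem_range.2 fun i => ?_)
    obtain ⟨t, ht, hti⟩ := h₂ i
    rw [le_div_iff_of_neg ha]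
    linarith [le_csSup ⟨_, hup⟩ ht, (abs_le.1 hti).1]
  rw [le_div_iff_of_neg ha] at hlow
  exact abs_le.2 ⟨by linarith, by linarith [csSup_le ⟨t₀, ht₀⟩ hup]⟩

lemma abs_csSup_sub_le_of_pos (hA : BddBelow (range A)) (ha : 0 < a)
    (h₁ : ∀ t ∈ S, ∃ i, |t - (c - a * A i)| ≤ δ) (h₂ : ∀ i, ∃ t ∈ S, |t - (c - a * A i)| ≤ δ) :
    |sSup S - (c - a * sInf (range A))| ≤ δ := by
  have h := abs_csSup_sub_le_of_neg (A := fun i => -A i) (a := -a)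
    (by rwa [← neg_range, bddAbove_neg]) (neg_lt_zero.2 ha)
    (by simpa only [neg_mul_neg] using h₁) (by simpa only [neg_mul_neg] using h₂)
  rwa [← neg_range, Real.sSup_neg, neg_mul_neg] at h

lemma abs_csInf_sub_le_of_neg (hA : BddBelow (range A)) (ha : a < 0)
    (h₁ : ∀ t ∈ S, ∃ i, |t - (c - a * A i)| ≤ δ) (h₂ : ∀ i, ∃ t ∈ S, |t - (c - a * A i)| ≤ δ) :
    |sInf S - (c - a * sInf (range A))| ≤ δ := by
  have h := abs_csInf_sub_le_of_pos (A := fun i => -A i) (a := -a)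
    (by rwa [← neg_range, bddAbove_neg]) (neg_pos.2 ha)
    (by simpa only [neg_mul_neg] using h₁) (by simpa only [neg_mul_neg] using h₂)
  rwa [← neg_range, Real.sSup_neg, neg_mul_neg] at h

end

lemma tendsto_sub_div_of_abs_sub_le {g : ℝ → ℝ} {c L D : ℝ}
    (h : ∀ᶠ a in 𝓝[≠] 0, |g a - (c - a * L)| ≤ a ^ 2 * D) :
    Tendsto (fun a => (g a - c) / a) (𝓝[≠] 0) (𝓝 (-L)) := by
  rw [tendsto_iff_norm_sub_tendsto_zero]
  have hlim : Tendsto (fun a : ℝ => |a| * D) (𝓝[≠] 0) (𝓝 0) :=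
    ((continuous_abs.mul continuous_const).tendsto' 0 0 (by simp)).mono_left nhdsWithin_le_nhds
  refine squeeze_zero' (Eventually.of_forall fun _ => norm_nonneg _) ?_ hlim
  filter_upwards [h, self_mem_nhdsWithin] with a ha (ha₀ : a ≠ 0)
  rw [show (g a - c) / a - -L = (g a - (c - a * L)) / a by field_simp; ring, Real.norm_eq_abs,
    abs_div, div_le_iff₀ (abs_pos.2 ha₀), mul_right_comm, ← sq, sq_abs]
  exact ha

namespace ArnoldTongue

def arnoldMap (φ : ℝ → ℝ) (t a x : ℝ) : ℝ := x + t + a * φ x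

variable {φ : ℝ → ℝ} {K C t a x : ℝ} {p : ℤ} {q : ℕ}

lemma monotone_arnoldMap (hLip : ∀ x y, |φ x - φ y| ≤ K * |x - y|) (ha : |a| * K ≤ 1) :
    Monotone (arnoldMap φ t a) := by
  intro x y hxy
  have h : |a * (φ y - φ x)| ≤ y - x :=
    calc |a * (φ y - φ x)| = |a| * |φ y - φ x| := abs_mul _ _
      _ ≤ |a| * (K * (y - x)) := by
          gcongr; simpa [abs_of_nonneg (sub_nonneg.2 hxy)] using hLip y x
      _ = |a| * K * (y - x) := by ring
      _ ≤ y - x := mul_le_of_le_one_left (sub_nonneg.2 hxy) ha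
  simp only [arnoldMap]
  linarith [neg_abs_le (a * (φ y - φ x))]

def arnoldLift (t : ℝ) (hLip : ∀ x y, |φ x - φ y| ≤ K * |x - y|) (hper : Function.Periodic φ 1)
    (ha : |a| * K ≤ 1) : CircleDeg1Lift where
  toFun := arnoldMap φ t a
  monotone' := monotone_arnoldMap hLip ha
  map_add_one' x := by simp only [arnoldMap, hper x]; ring

lemma eq_div_iff_exists_arnoldMap_iterate_eq (hLip : ∀ x y, |φ x - φ y| ≤ K * |x - y|)
    (hper : Function.Periodic φ 1) (ha : |a| * K ≤ 1) {τ : ℝ}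
    (hτ : IsTransNum (arnoldMap φ t a) τ) (hq : 0 < q) :
    τ = p / q ↔ ∃ x, (arnoldMap φ t a)^[q] x = x + p := by
  let f := arnoldLift t hLip hper ha
  have hf : Continuous f := by
    have := continuous_of_abs_sub_le hLip
    exact (continuous_id.add continuous_const).add (continuous_const.mul this)
  rw [← f.translationNumber_eq_of_isTransNum hτ, f.translationNumber_eq_rat_iff hf hq,
    CircleDeg1Lift.coe_pow]
  rfl

lemma arnoldMap_iterate (k : ℕ) (x : ℝ) :
    (arnoldMap φ t a)^[k] x
      = x + k * t + a * ∑ j ∈ Finset.range k, φ ((arnoldMap φ t a)^[j] x) := by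
  induction k with
  | zero => simp
  | succ k ih =>
    rw [Function.iterate_succ_apply', Finset.sum_range_succ, arnoldMap, ih]
    push_cast
    ring

lemma abs_arnoldMap_iterate_sub_le (hC : ∀ y, |φ y| ≤ C) (k : ℕ) (x : ℝ) :
    |(arnoldMap φ t a)^[k] x - (x + k * t)| ≤ k * (|a| * C) := by
  rw [arnoldMap_iterate, add_sub_cancel_left, abs_mul]
  calc |a| * |∑ j ∈ Finset.range k, φ ((arnoldMap φ t a)^[j] x)|
      ≤ |a| * (k * C) := by
        gcongr; simpa using Finset.abs_sum_le_card_mul (Finset.range k) fun j _ => hC _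
    _ = k * (|a| * C) := by ring

section PeriodicOrbit

variable (hC : ∀ y, |φ y| ≤ C) (hq : 0 < q) (hx : (arnoldMap φ t a)^[q] x = x + p)
include hC hq hx

lemma abs_sub_div_le_of_iterate_eq : |t - p / q| ≤ |a| * C := by
  have hq' : (0 : ℝ) < q := by exact_mod_cast hq
  have h := abs_arnoldMap_iterate_sub_le (t := t) (a := a) hC q x
  rw [hx] at h
  rw [show t - p / q = -(x + p - (x + q * t)) / q by field_simp; ring, abs_div, abs_neg,
    abs_of_pos hq', div_le_iff₀ hq']
  linarith

lemma abs_arnoldMap_iterate_sub_rigid_le {k : ℕ} (hk : k ≤ q) :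
    |(arnoldMap φ t a)^[k] x - (x + k * p / q)| ≤ 2 * q * (|a| * C) := by
  have hk' : (k : ℝ) ≤ q := by exact_mod_cast hk
  have hkt : |k * (t - p / q)| ≤ q * (|a| * C) := by
    rw [abs_mul, Nat.abs_cast]
    exact mul_le_mul hk' (abs_sub_div_le_of_iterate_eq hC hq hx) (abs_nonneg _) (Nat.cast_nonneg _)
  have hF := abs_arnoldMap_iterate_sub_le (t := t) (a := a) hC k x
  calc |(arnoldMap φ t a)^[k] x - (x + k * p / q)|
      = |((arnoldMap φ t a)^[k] x - (x + k * t)) + k * (t - p / q)| := by ring_nf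
    _ ≤ k * (|a| * C) + q * (|a| * C) := (abs_add_le _ _).trans (add_le_add hF hkt)
    _ ≤ 2 * q * (|a| * C) := by
        have haC : 0 ≤ |a| * C := mul_nonneg (abs_nonneg a) ((abs_nonneg _).trans (hC 0))
        linarith [mul_le_mul_of_nonneg_right hk' haC]

lemma abs_sub_avgA_le_of_iterate_eq (hK : 0 ≤ K) (hLip : ∀ x y, |φ x - φ y| ≤ K * |x - y|) :
    |t - (p / q - a * avgA φ p q x)| ≤ a ^ 2 * (2 * K * C * q) := by
  have hq' : (0 : ℝ) < q := by exact_mod_cast hq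
  have hsum : t - (p / q - a * avgA φ p q x) = a / q * ∑ k ∈ Finset.range q,
      (φ (x + k * p / q) - φ ((arnoldMap φ t a)^[k] x)) := by
    have h := arnoldMap_iterate (φ := φ) (t := t) (a := a) q x
    rw [hx] at h
    rw [avgA, Finset.sum_sub_distrib]
    field_simp
    linear_combination -h
  have hterm : ∀ k ∈ Finset.range q,
      |φ (x + k * p / q) - φ ((arnoldMap φ t a)^[k] x)| ≤ K * (2 * q * (|a| * C)) :=
    fun k hk => (hLip _ _).trans <| by
      rw [abs_sub_comm]
      gcongr
      exact abs_arnoldMap_iterate_sub_rigid_le hC hq hx (Finset.mem_range.1 hk).le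
  rw [hsum, abs_mul, abs_div, Nat.abs_cast, ← sq_abs a]
  calc |a| / q * |∑ k ∈ Finset.range q, (φ (x + k * p / q) - φ ((arnoldMap φ t a)^[k] x))|
      ≤ |a| / q * (q * (K * (2 * q * (|a| * C)))) := by
        gcongr; simpa using Finset.abs_sum_le_card_mul _ hterm
    _ = |a| ^ 2 * (2 * K * C * q) := by field_simp

end PeriodicOrbit

lemma continuous_arnoldMap_iterate_apply (hφ : Continuous φ) (a : ℝ) (k : ℕ) (x : ℝ) :
    Continuous fun t => (arnoldMap φ t a)^[k] x := by
  induction k with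
  | zero => exact continuous_const
  | succ k ih =>
    simp only [Function.iterate_succ_apply', arnoldMap]
    exact (ih.add continuous_id).add (continuous_const.mul (hφ.comp ih))

lemma exists_arnoldMap_iterate_eq (hφ : Continuous φ) (hC : ∀ y, |φ y| ≤ C) (hq : 0 < q)
    (p : ℤ) (a x : ℝ) : ∃ t, (arnoldMap φ t a)^[q] x = x + p := by
  have hq' : (0 : ℝ) < q := by exact_mod_cast hq
  have hF := fun t => abs_le.1 (abs_arnoldMap_iterate_sub_le (t := t) (a := a) hC q x)
  have e₀ : (q : ℝ) * (p / q - |a| * C) = p - q * (|a| * C) := by field_simp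
  have e₁ : (q : ℝ) * (p / q + |a| * C) = p + q * (|a| * C) := by field_simp
  exact intermediate_value_univ (p / q - |a| * C) (p / q + |a| * C)
    (continuous_arnoldMap_iterate_apply hφ a q x)
    ⟨by linarith [(hF (p / q - |a| * C)).2], by linarith [(hF (p / q + |a| * C)).1]⟩

lemma fiber_approx_by_avgA (hK : 0 ≤ K) (hLip : ∀ x y, |φ x - φ y| ≤ K * |x - y|)
    (hper : Function.Periodic φ 1) (ha : |a| * K ≤ 1) (hC : ∀ y, |φ y| ≤ C) (hq : 0 < q)
    {τ : ℝ → ℝ} (hτ : ∀ t, IsTransNum (arnoldMap φ t a) (τ t)) :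
    (∀ t ∈ {t | τ t = p / q}, ∃ x, |t - (p / q - a * avgA φ p q x)| ≤ a ^ 2 * (2 * K * C * q)) ∧
    ∀ x, ∃ t ∈ {t | τ t = p / q}, |t - (p / q - a * avgA φ p q x)| ≤ a ^ 2 * (2 * K * C * q) := by
  have hmem := fun t => eq_div_iff_exists_arnoldMap_iterate_eq (p := p) hLip hper ha (hτ t) hq
  refine ⟨fun t ht => ?_, fun x => ?_⟩
  · obtain ⟨x, hx⟩ := (hmem t).1 ht
    exact ⟨x, abs_sub_avgA_le_of_iterate_eq hC hq hx hK hLip⟩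
  · obtain ⟨t, hx⟩ := exists_arnoldMap_iterate_eq (continuous_of_abs_sub_le hLip) hC hq p a x
    exact ⟨t, (hmem t).2 ⟨x, hx⟩, abs_sub_avgA_le_of_iterate_eq hC hq hx hK hLip⟩

lemma abs_avgA_le (hC : ∀ y, |φ y| ≤ C) (p : ℤ) (hq : 0 < q) (x : ℝ) : |avgA φ p q x| ≤ C := by
  have hq' : (0 : ℝ) < q := by exact_mod_cast hq
  rw [avgA, abs_mul, abs_of_pos (one_div_pos.2 hq'), one_div_mul_eq_div, div_le_iff₀ hq',
    mul_comm]
  simpa using Finset.abs_sum_le_card_mul (Finset.range q) fun k _ => hC (x + k * p / q)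

end ArnoldTongue

open ArnoldTongue in
theorem stmt_13_general (φ : ℝ → ℝ) (K : ℝ) (hK : 0 < K)
    (hLip : ∀ x y : ℝ, |φ x - φ y| ≤ K * |x - y|)
    (hper : ∀ x : ℝ, φ (x + 1) = φ x)
    (τ : ℝ → ℝ → ℝ)
    (hτ : ∀ t : ℝ, ∀ a ∈ Set.Ioo (-(1 / K)) (1 / K),
      IsTransNum (fun x => x + t + a * φ x) (τ t a))
    (p : ℤ) (q : ℕ) (hq : 1 ≤ q)
    (γl γr : ℝ → ℝ)
    (hγl : ∀ a : ℝ, γl a = sInf {t : ℝ | τ t a = (p : ℝ) / (q : ℝ)})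
    (hγr : ∀ a : ℝ, γr a = sSup {t : ℝ | τ t a = (p : ℝ) / (q : ℝ)})
    (γm γp : ℝ → ℝ)
    (hγm : ∀ a : ℝ, γm a = if 0 ≤ a then γl a else γr a)
    (hγp : ∀ a : ℝ, γp a = if 0 ≤ a then γr a else γl a) :
    Filter.Tendsto (fun a : ℝ => (γm a - (p : ℝ) / (q : ℝ)) / a)
      (nhdsWithin 0 {0}ᶜ) (nhds (-sSup (Set.range (avgA φ p q)))) ∧
    Filter.Tendsto (fun a : ℝ => (γp a - (p : ℝ) / (q : ℝ)) / a)
      (nhdsWithin 0 {0}ᶜ) (nhds (-sInf (Set.range (avgA φ p q)))) := by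
  obtain ⟨C, hC⟩ := isBounded_iff_forall_norm_le.1
    (Function.Periodic.isBounded_of_continuous hper one_ne_zero (continuous_of_abs_sub_le hLip))
  have hφC y : |φ y| ≤ C := hC _ (mem_range_self y)
  have hA : Bornology.IsBounded (range (avgA φ p q)) :=
    isBounded_iff_forall_norm_le.2 ⟨C, forall_mem_range.2 (abs_avgA_le hφC p hq)⟩
  have hsmall : ∀ᶠ a in 𝓝[≠] (0 : ℝ), a ∈ Ioo (-(1 / K)) (1 / K) ∧ a ≠ 0 := by
    have hK' : 0 < 1 / K := one_div_pos.2 hK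
    filter_upwards [nhdsWithin_le_nhds (Ioo_mem_nhds (neg_neg_of_pos hK') hK'),
      self_mem_nhdsWithin] with a h₁ h₂ using ⟨h₁, h₂⟩
  have hfib := fun a (ha : a ∈ Ioo (-(1 / K)) (1 / K)) =>
    fiber_approx_by_avgA (p := p) (τ := (τ · a)) hK.le hLip hper
      ((lt_div_iff₀ hK).1 (abs_lt.2 ha)).le hφC hq (hτ · a ha)
  constructor
  · refine tendsto_sub_div_of_abs_sub_le (D := 2 * K * C * q) (hsmall.mono fun a ⟨ha, ha₀⟩ => ?_)
    obtain ⟨h₁, h₂⟩ := hfib a ha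
    rw [hγm, hγl, hγr]
    split_ifs with hpos
    · exact abs_csInf_sub_le_of_pos hA.bddAbove (hpos.lt_of_ne' ha₀) h₁ h₂
    · exact abs_csSup_sub_le_of_neg hA.bddAbove (not_le.1 hpos) h₁ h₂
  · refine tendsto_sub_div_of_abs_sub_le (D := 2 * K * C * q) (hsmall.mono fun a ⟨ha, ha₀⟩ => ?_)
    obtain ⟨h₁, h₂⟩ := hfib a ha
    rw [hγp, hγl, hγr]
    split_ifs with hpos
    · exact abs_csSup_sub_le_of_pos hA.bddBelow (hpos.lt_of_ne' ha₀) h₁ h₂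
    · exact abs_csInf_sub_le_of_neg hA.bddBelow (not_le.1 hpos) h₁ h₂

theorem stmt_13 (φ : ℝ → ℝ) (K : ℝ) (hK : 0 < K)
    (hLip : ∀ x y : ℝ, |φ x - φ y| ≤ K * |x - y|)
    (hper : ∀ x : ℝ, φ (x + 1) = φ x)
    (τ : ℝ → ℝ → ℝ)
    (hτ : ∀ t : ℝ, ∀ a ∈ Set.Ioo (-(1 / K)) (1 / K),
      IsTransNum (fun x => x + t + a * φ x) (τ t a))
    (p : ℤ) (q : ℕ) (hq : 1 ≤ q) (hpq : Nat.Coprime p.natAbs q)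
    (γl γr : ℝ → ℝ)
    (hγl : ∀ a : ℝ, γl a = sInf {t : ℝ | τ t a = (p : ℝ) / (q : ℝ)})
    (hγr : ∀ a : ℝ, γr a = sSup {t : ℝ | τ t a = (p : ℝ) / (q : ℝ)})
    (γm γp : ℝ → ℝ)
    (hγm : ∀ a : ℝ, γm a = if 0 ≤ a then γl a else γr a)
    (hγp : ∀ a : ℝ, γp a = if 0 ≤ a then γr a else γl a) :
    Filter.Tendsto (fun a : ℝ => (γm a - (p : ℝ) / (q : ℝ)) / a)
      (nhdsWithin 0 {0}ᶜ) (nhds (-sSup (Set.range (avgA φ p q)))) ∧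
    Filter.Tendsto (fun a : ℝ => (γp a - (p : ℝ) / (q : ℝ)) / a)
      (nhdsWithin 0 {0}ᶜ) (nhds (-sInf (Set.range (avgA φ p q)))) :=
  stmt_13_general φ K hK hLip hper τ hτ p q hq γl γr hγl hγr γm γp hγm hγp
end

section
/- Let r > 0 and θ ∈ ℝ, and let f be holomorphic on the open disk {z ∈ ℂ : |z| < r}. Suppose (a_n) is a sequence of nonzero real numbers with |a_n| < r/2 and a_n → 0, and for each n there are: a map F_n : ℝ → ℝ with F_n(x+1) = F_n(x) + 1 for all x, and a holomorphic function f_n on the annulus {z : |a_n|/2 < |z| < r} satisfying f_n(a_n·e^{2πix}) = a_n·e^{2πi·F_n(x)} for all x ∈ ℝ. Assume f_n → f uniformly on compact subsets of the punctured disk {z : 0 < |z| < r}, and F_n(x) → x + θ uniformly in x ∈ ℝ as n → ∞. Then f(0) = 0 and f'(0) = e^{2πiθ}. -/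
/-!
On a circle `|z| = ρ` inside the annulus, `∮ f_n(z)/z dz` and `∮ f_n(z)/z² dz` converge to
`2πi f(0)` and `2πi f'(0)` by uniform convergence and Cauchy's formula. Since `f_n` is
holomorphic on the annulus, the circle can be shrunk to the invariant circle `|z| = |a_n|`, on
which the semiconjugacy gives `|f_n(z)| = |a_n| → 0` and `f_n(z)/z = e^{2πi(F_n(x) - x)}` for
`z = a_n e^{2πix}`, uniformly close to `e^{2πiθ}`; there the two integrals tend to `0` and
`2πi e^{2πiθ}`.
-/

open Filter Topology Set Complex Metric Real

theorem norm_exp_two_pi_I_mul (x : ℝ) : ‖exp (2 * π * I * x)‖ = 1 := by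
  simp [Complex.norm_exp]

theorem norm_exp_two_pi_I_mul_sub_le (u v : ℝ) :
    ‖exp (2 * π * I * u) - exp (2 * π * I * v)‖ ≤ 2 * π * |u - v| := by
  have hsplit : exp (2 * π * I * u) - exp (2 * π * I * v) =
      exp (2 * π * I * v) * (exp (I * ↑(2 * π * (u - v))) - 1) := by
    rw [mul_sub, mul_one, ← Complex.exp_add]; push_cast; ring_nf
  rw [hsplit, norm_mul, norm_exp_two_pi_I_mul, one_mul]
  refine Real.norm_exp_I_mul_ofReal_sub_one_le.trans_eq ?_
  rw [Real.norm_eq_abs, abs_mul, abs_of_pos two_pi_pos]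

theorem exists_eq_mul_exp_two_pi_I_mul {a : ℝ} (ha : a ≠ 0) {z : ℂ} (hz : ‖z‖ = |a|) :
    ∃ x : ℝ, z = a * exp (2 * π * I * x) := by
  obtain ⟨t, ht⟩ := (Complex.norm_eq_one_iff (z / a)).1 (by
    rw [norm_div, hz, Complex.norm_real, Real.norm_eq_abs, div_self (abs_ne_zero.2 ha)])
  refine ⟨t / (2 * π), ?_⟩
  rw [← mul_div_cancel₀ z (ofReal_ne_zero.2 ha), ← ht]
  congr 2; push_cast; field_simp

theorem sphere_zero_subset_setOf_norm_lt_and_lt {s₀ s r : ℝ} (hs₀ : s₀ < s) (hr : s < r) :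
    sphere (0 : ℂ) s ⊆ {z : ℂ | s₀ < ‖z‖ ∧ ‖z‖ < r} := fun z hz => by
  rw [mem_sphere_zero_iff_norm] at hz
  exact ⟨hz ▸ hs₀, hz ▸ hr⟩

variable {E : Type*} [NormedAddCommGroup E] [NormedSpace ℂ E]

theorem TendstoUniformlyOn.smul_of_norm_le {α ι : Type*} {l : Filter ι} {s : Set α}
    {F : ι → α → E} {f : α → E} {w : α → ℂ} {M : ℝ} (hw : ∀ x ∈ s, ‖w x‖ ≤ M)
    (h : TendstoUniformlyOn F f l s) :
    TendstoUniformlyOn (fun i x => w x • F i x) (fun x => w x • f x) l s := by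
  rw [Metric.tendstoUniformlyOn_iff] at h ⊢
  intro ε hε
  have hM : 0 < |M| + 1 := by positivity
  filter_upwards [h (ε / (|M| + 1)) (by positivity)] with i hi x hx
  rw [dist_smul₀]
  calc ‖w x‖ * dist (f x) (F i x) ≤ (|M| + 1) * dist (f x) (F i x) := by
        gcongr; linarith [hw x hx, le_abs_self M]
    _ < (|M| + 1) * (ε / (|M| + 1)) := by gcongr; exact hi x hx
    _ = ε := mul_div_cancel₀ _ hM.ne'

theorem TendstoUniformlyOn.tendsto_circleIntegral_smul {ι : Type*} {l : Filter ι}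
    [l.IsCountablyGenerated] {F : ι → ℂ → E} {f : ℂ → E} {w : ℂ → ℂ} {c : ℂ} {R : ℝ}
    (hR : 0 ≤ R) (hw : ContinuousOn w (sphere c R))
    (hF : ∀ᶠ i in l, ContinuousOn (F i) (sphere c R)) (h : TendstoUniformlyOn F f l (sphere c R)) :
    Tendsto (fun i => ∮ z in C(c, R), w z • F i z) l (𝓝 (∮ z in C(c, R), w z • f z)) := by
  obtain ⟨M, hM⟩ := (isCompact_sphere c R).exists_bound_of_continuousOn hw
  exact (h.smul_of_norm_le hM).tendsto_circleIntegral_of_continuousOn hR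
    (hF.mono fun i hi => hw.smul hi)

theorem circleIntegral_inv_smul_eq_of_differentiableOn_annulus {s₀ s ρ r : ℝ} {g : ℂ → E}
    (hs : 0 < s) (hs₀ : s₀ < s) (hsρ : s ≤ ρ) (hρr : ρ < r)
    (hg : DifferentiableOn ℂ g {z : ℂ | s₀ < ‖z‖ ∧ ‖z‖ < r}) :
    ∮ z in C(0, ρ), z⁻¹ • g z = ∮ z in C(0, s), z⁻¹ • g z := by
  have hopen : IsOpen {z : ℂ | s₀ < ‖z‖ ∧ ‖z‖ < r} :=
    (isOpen_lt continuous_const continuous_norm).inter (isOpen_lt continuous_norm continuous_const)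
  have hsub : closedBall (0 : ℂ) ρ \ ball 0 s ⊆ {z : ℂ | s₀ < ‖z‖ ∧ ‖z‖ < r} := by
    rintro z ⟨hzρ, hzs⟩
    rw [mem_closedBall_zero_iff] at hzρ
    rw [mem_ball_zero_iff, not_lt] at hzs
    exact ⟨by linarith, by linarith⟩
  simpa only [sub_zero] using
    circleIntegral_sub_center_inv_smul_eq_of_differentiable_on_annulus_off_countable hs hsρ
      countable_empty (hg.continuousOn.mono hsub) fun _ hz => hg.differentiableAt <|
        hopen.mem_nhds <| hsub ⟨ball_subset_closedBall hz.1.1,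
          fun hz' => hz.1.2 (ball_subset_closedBall hz')⟩

variable [CompleteSpace E]

theorem norm_circleIntegral_sub_center_inv_smul_sub_le {c : ℂ} {R ε : ℝ} {g : ℂ → E} {v : E}
    (hR : 0 < R) (hg : ContinuousOn g (sphere c R)) (h : ∀ z ∈ sphere c R, ‖g z - v‖ ≤ ε) :
    ‖(∮ z in C(c, R), (z - c)⁻¹ • g z) - (2 * π * I : ℂ) • v‖ ≤ 2 * π * ε := by
  have hinv : ContinuousOn (fun z : ℂ => (z - c)⁻¹) (sphere c R) :=
    (continuousOn_id.sub continuousOn_const).inv₀ fun z hz => sub_ne_zero.2 <|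
      ne_of_mem_sphere hz hR.ne'
  have hconst : (∮ z in C(c, R), (z - c)⁻¹ • v) = (2 * π * I : ℂ) • v := by
    rw [circleIntegral.integral_smul_const, circleIntegral.integral_sub_inv_of_mem_ball
      (mem_ball_self hR)]
  rw [← hconst, ← circleIntegral.integral_sub ((hinv.fun_smul hg).circleIntegrable hR.le)
    ((hinv.fun_smul continuousOn_const).circleIntegrable hR.le)]
  refine (circleIntegral.norm_integral_le_of_norm_le_const hR.le (C := R⁻¹ * ε)
    fun z hz => ?_).trans_eq (by field_simp)
  rw [← smul_sub, norm_smul, norm_inv, ← dist_eq_norm, mem_sphere.1 hz]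
  exact mul_le_mul_of_nonneg_left (h z hz) (inv_nonneg.2 hR.le)

theorem tendsto_circleIntegral_sub_center_inv_smul {ι : Type*} {l : Filter ι} {c : ℂ}
    {R : ι → ℝ} {g : ι → ℂ → E} {v : E} (hR : ∀ i, 0 < R i)
    (hg : ∀ i, ContinuousOn (g i) (sphere c (R i)))
    (h : ∀ ε > 0, ∀ᶠ i in l, ∀ z ∈ sphere c (R i), ‖g i z - v‖ ≤ ε) :
    Tendsto (fun i => ∮ z in C(c, R i), (z - c)⁻¹ • g i z) l (𝓝 ((2 * π * I : ℂ) • v)) := by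
  rw [Metric.tendsto_nhds]
  intro ε hε
  filter_upwards [h (ε / (4 * π)) (by positivity)] with i hi
  rw [dist_eq_norm]
  calc _ ≤ 2 * π * (ε / (4 * π)) := norm_circleIntegral_sub_center_inv_smul_sub_le (hR i) (hg i) hi
    _ < ε := by field_simp; linarith

section UniformLimit

variable {ι : Type*} {l : Filter ι} [l.IsCountablyGenerated] {F : ι → ℂ → E} {f : ℂ → E}
  {ρ : ℝ}

theorem TendstoUniformlyOn.tendsto_circleIntegral_inv_smul (hρ : 0 < ρ)
    (hf : DifferentiableOn ℂ f (closedBall 0 ρ)) (hF : ∀ᶠ i in l, ContinuousOn (F i) (sphere 0 ρ))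
    (h : TendstoUniformlyOn F f l (sphere 0 ρ)) :
    Tendsto (fun i => ∮ z in C(0, ρ), z⁻¹ • F i z) l (𝓝 ((2 * π * I : ℂ) • f 0)) := by
  have hcauchy : ∮ z in C(0, ρ), z⁻¹ • f z = (2 * π * I : ℂ) • f 0 := by
    simpa only [sub_zero] using hf.circleIntegral_sub_inv_smul (mem_ball_self hρ)
  rw [← hcauchy]
  exact h.tendsto_circleIntegral_smul hρ.le
    (continuousOn_inv₀.mono fun z hz => ne_zero_of_mem_sphere hρ.ne' ⟨z, hz⟩) hF

theorem TendstoUniformlyOn.tendsto_circleIntegral_inv_smul_inv_smul (hρ : 0 < ρ)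
    (hf : DifferentiableOn ℂ f (closedBall 0 ρ)) (hF : ∀ᶠ i in l, ContinuousOn (F i) (sphere 0 ρ))
    (h : TendstoUniformlyOn F f l (sphere 0 ρ)) :
    Tendsto (fun i => ∮ z in C(0, ρ), z⁻¹ • z⁻¹ • F i z) l (𝓝 ((2 * π * I : ℂ) • deriv f 0)) := by
  have hcauchy : ∮ z in C(0, ρ), z⁻¹ • z⁻¹ • f z = (2 * π * I : ℂ) • deriv f 0 := by
    rw [← hf.deriv_eq_smul_circleIntegral hρ]
    simp only [sub_zero, one_div, smul_smul, sq, mul_inv]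
  have hinv : ContinuousOn (fun z : ℂ => z⁻¹) (sphere 0 ρ) :=
    continuousOn_inv₀.mono fun z hz => ne_zero_of_mem_sphere hρ.ne' ⟨z, hz⟩
  simpa only [mul_smul, hcauchy] using
    h.tendsto_circleIntegral_smul (w := fun z => z⁻¹ * z⁻¹) hρ.le (hinv.mul hinv) hF

end UniformLimit

theorem norm_apply_eq_of_semiconj {a : ℝ} {g : ℂ → ℂ} {G : ℝ → ℝ} (ha : a ≠ 0)
    (hconj : ∀ x : ℝ, g (a * exp (2 * π * I * x)) = a * exp (2 * π * I * G x))
    {z : ℂ} (hz : z ∈ sphere 0 |a|) : ‖g z‖ = |a| := by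
  obtain ⟨x, rfl⟩ := exists_eq_mul_exp_two_pi_I_mul ha (by simpa using hz)
  rw [hconj, norm_mul, norm_exp_two_pi_I_mul, mul_one, Complex.norm_real, Real.norm_eq_abs]

theorem norm_inv_smul_apply_sub_exp_le_of_semiconj {a : ℝ} {g : ℂ → ℂ} {G : ℝ → ℝ} (ha : a ≠ 0)
    (hconj : ∀ x : ℝ, g (a * exp (2 * π * I * x)) = a * exp (2 * π * I * G x))
    {θ δ : ℝ} (hG : ∀ x, |G x - (x + θ)| ≤ δ) {z : ℂ} (hz : z ∈ sphere 0 |a|) :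
    ‖z⁻¹ • g z - exp (2 * π * I * θ)‖ ≤ 2 * π * δ := by
  obtain ⟨x, rfl⟩ := exists_eq_mul_exp_two_pi_I_mul ha (by simpa using hz)
  have hrot : (a * exp (2 * π * I * x))⁻¹ • g (a * exp (2 * π * I * x)) - exp (2 * π * I * θ) =
      (exp (2 * π * I * x))⁻¹ * (exp (2 * π * I * G x) - exp (2 * π * I * ↑(x + θ))) := by
    have : (a : ℂ) ≠ 0 := ofReal_ne_zero.2 ha
    rw [hconj, smul_eq_mul, ofReal_add, mul_add, Complex.exp_add]
    field_simp
  rw [hrot, norm_mul, norm_inv, norm_exp_two_pi_I_mul, inv_one, one_mul]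
  exact (norm_exp_two_pi_I_mul_sub_le _ _).trans (by gcongr; exact hG x)

section Semiconjugacy

variable {ι : Type*} {l : Filter ι} {a : ι → ℝ} {g : ι → ℂ → ℂ} {G : ι → ℝ → ℝ}

theorem tendsto_circleIntegral_inv_smul_of_semiconj (ha : ∀ i, a i ≠ 0)
    (hlim : Tendsto a l (𝓝 0))
    (hconj : ∀ i (x : ℝ), g i (a i * exp (2 * π * I * x)) = a i * exp (2 * π * I * G i x))
    (hg : ∀ i, ContinuousOn (g i) (sphere 0 |a i|)) :
    Tendsto (fun i => ∮ z in C(0, |a i|), z⁻¹ • g i z) l (𝓝 0) := by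
  have hsmall : ∀ ε > 0, ∀ᶠ i in l, ∀ z ∈ sphere (0 : ℂ) |a i|, ‖g i z - 0‖ ≤ ε :=
    fun ε hε => (hlim.abs.eventually (ge_mem_nhds (by simpa using hε))).mono fun i hi z hz => by
      rwa [sub_zero, norm_apply_eq_of_semiconj (ha i) (hconj i) hz]
  simpa only [sub_zero, smul_zero] using
    tendsto_circleIntegral_sub_center_inv_smul (fun i => abs_pos.2 (ha i)) hg hsmall

theorem tendsto_circleIntegral_inv_smul_inv_smul_of_semiconj (ha : ∀ i, a i ≠ 0)
    (hconj : ∀ i (x : ℝ), g i (a i * exp (2 * π * I * x)) = a i * exp (2 * π * I * G i x))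
    (hg : ∀ i, ContinuousOn (g i) (sphere 0 |a i|)) {θ : ℝ}
    (hG : TendstoUniformly G (fun x => x + θ) l) :
    Tendsto (fun i => ∮ z in C(0, |a i|), z⁻¹ • z⁻¹ • g i z) l
      (𝓝 ((2 * π * I : ℂ) • exp (2 * π * I * θ))) := by
  have hclose : ∀ ε > 0, ∀ᶠ i in l, ∀ z ∈ sphere (0 : ℂ) |a i|,
      ‖z⁻¹ • g i z - exp (2 * π * I * θ)‖ ≤ ε := fun ε hε => by
    filter_upwards [Metric.tendstoUniformly_iff.1 hG (ε / (2 * π)) (by positivity)]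
      with i hi z hz
    refine (norm_inv_smul_apply_sub_exp_le_of_semiconj (ha i) (hconj i) (δ := ε / (2 * π))
      (fun x => ?_) hz).trans_eq (by field_simp)
    rw [← Real.dist_eq, dist_comm]
    exact (hi x).le
  have hcont : ∀ i, ContinuousOn (fun z => z⁻¹ • g i z) (sphere 0 |a i|) := fun i =>
    (continuousOn_inv₀.mono fun z hz => ne_zero_of_mem_sphere (abs_ne_zero.2 (ha i)) ⟨z, hz⟩).smul
      (hg i)
  simpa only [sub_zero] using
    tendsto_circleIntegral_sub_center_inv_smul (fun i => abs_pos.2 (ha i)) hcont hclose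

end Semiconjugacy

theorem stmt_14_general (r θ : ℝ) (hr : 0 < r) (f : ℂ → ℂ)
    (hf : DifferentiableOn ℂ f (Metric.ball 0 r))
    (a : ℕ → ℝ) (ha0 : ∀ n : ℕ, a n ≠ 0) (har : ∀ n : ℕ, |a n| < r / 2)
    (halim : Filter.Tendsto a Filter.atTop (nhds 0))
    (F : ℕ → ℝ → ℝ)
    (fn : ℕ → ℂ → ℂ)
    (hfn : ∀ n : ℕ, DifferentiableOn ℂ (fn n)
      {z : ℂ | |a n| / 2 < ‖z‖ ∧ ‖z‖ < r})
    (hconj : ∀ (n : ℕ) (x : ℝ),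
      fn n ((a n : ℂ) * Complex.exp (2 * Real.pi * Complex.I * (x : ℂ))) =
        (a n : ℂ) * Complex.exp (2 * Real.pi * Complex.I * (F n x : ℂ)))
    (huc : ∀ Kc : Set ℂ, Kc ⊆ {z : ℂ | 0 < ‖z‖ ∧ ‖z‖ < r} →
      IsCompact Kc → TendstoUniformlyOn (fun n => fn n) f Filter.atTop Kc)
    (hFuc : TendstoUniformly (fun n x => F n x) (fun x => x + θ) Filter.atTop) :
    f 0 = 0 ∧ deriv f 0 = Complex.exp (2 * Real.pi * Complex.I * (θ : ℂ)) := by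
  set ρ := r / 2
  have hρ : 0 < ρ := half_pos hr
  have hρr : ρ < r := half_lt_self hr
  have han : ∀ n, 0 < |a n| := fun n => abs_pos.2 (ha0 n)
  have hshrink : ∀ n (g : ℂ → ℂ), DifferentiableOn ℂ g {z : ℂ | |a n| / 2 < ‖z‖ ∧ ‖z‖ < r} →
      ∮ z in C(0, ρ), z⁻¹ • g z = ∮ z in C(0, |a n|), z⁻¹ • g z := fun n _ hg =>
    circleIntegral_inv_smul_eq_of_differentiableOn_annulus (han n) (half_lt_self (han n))
      (har n).le hρr hg
  have hcont_inner : ∀ n, ContinuousOn (fn n) (sphere 0 |a n|) := fun n =>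
    (hfn n).continuousOn.mono
      (sphere_zero_subset_setOf_norm_lt_and_lt (half_lt_self (han n)) (by linarith [har n]))
  have hcont_outer : ∀ᶠ n in atTop, ContinuousOn (fn n) (sphere 0 ρ) := .of_forall fun n =>
    (hfn n).continuousOn.mono
      (sphere_zero_subset_setOf_norm_lt_and_lt (by linarith [han n, har n]) hρr)
  have hunif := huc _ (sphere_zero_subset_setOf_norm_lt_and_lt hρ hρr) (isCompact_sphere 0 ρ)
  have hf' : DifferentiableOn ℂ f (closedBall 0 ρ) := hf.mono (closedBall_subset_ball hρr)
  have hinv_fn : ∀ n, DifferentiableOn ℂ (fun z => z⁻¹ • fn n z)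
      {z : ℂ | |a n| / 2 < ‖z‖ ∧ ‖z‖ < r} := fun n =>
    (differentiableOn_inv.mono fun _ hz => show _ ≠ 0 from
      norm_pos_iff.1 ((half_pos (han n)).trans hz.1)).smul (hfn n)
  have hvalue := tendsto_nhds_unique
    (hunif.tendsto_circleIntegral_inv_smul hρ hf' hcont_outer) <| by
    simp_rw [hshrink _ _ (hfn _)]
    exact tendsto_circleIntegral_inv_smul_of_semiconj ha0 halim hconj hcont_inner
  have hderiv := tendsto_nhds_unique
    (hunif.tendsto_circleIntegral_inv_smul_inv_smul hρ hf' hcont_outer) <| by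
    simp_rw [hshrink _ _ (hinv_fn _)]
    exact tendsto_circleIntegral_inv_smul_inv_smul_of_semiconj ha0 hconj hcont_inner hFuc
  exact ⟨(smul_eq_zero.1 hvalue).resolve_left two_pi_I_ne_zero,
    smul_right_injective ℂ two_pi_I_ne_zero hderiv⟩

theorem stmt_14 (r θ : ℝ) (hr : 0 < r) (f : ℂ → ℂ)
    (hf : DifferentiableOn ℂ f (Metric.ball 0 r))
    (a : ℕ → ℝ) (ha0 : ∀ n : ℕ, a n ≠ 0) (har : ∀ n : ℕ, |a n| < r / 2)
    (halim : Filter.Tendsto a Filter.atTop (nhds 0))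
    (F : ℕ → ℝ → ℝ) (hF : ∀ (n : ℕ) (x : ℝ), F n (x + 1) = F n x + 1)
    (fn : ℕ → ℂ → ℂ)
    (hfn : ∀ n : ℕ, DifferentiableOn ℂ (fn n)
      {z : ℂ | |a n| / 2 < ‖z‖ ∧ ‖z‖ < r})
    (hconj : ∀ (n : ℕ) (x : ℝ),
      fn n ((a n : ℂ) * Complex.exp (2 * Real.pi * Complex.I * (x : ℂ))) =
        (a n : ℂ) * Complex.exp (2 * Real.pi * Complex.I * (F n x : ℂ)))
    (huc : ∀ Kc : Set ℂ, Kc ⊆ {z : ℂ | 0 < ‖z‖ ∧ ‖z‖ < r} →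
      IsCompact Kc → TendstoUniformlyOn (fun n => fn n) f Filter.atTop Kc)
    (hFuc : TendstoUniformly (fun n x => F n x) (fun x => x + θ) Filter.atTop) :
    f 0 = 0 ∧ deriv f 0 = Complex.exp (2 * Real.pi * Complex.I * (θ : ℂ)) :=
  stmt_14_general r θ hr f hf a ha0 har halim F fn hfn hconj huc hFuc
end
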